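/- arXiv:2605.20903 — 2 statements merged into one kernel-verified Lean document; each statement's English description precedes it below -/
import Mathlib

section
/- For fb-tableaux S and T of size n, the relation S ⊲ T is a cover relation in esTam_n (that is, S ⊲ T, S ≠ T, and every U with S ⊲ U ⊲ T equals S or T) if and only if T is obtained from S by a move of type I, a move of type II, or a move of type III. -/
open scoped Classical

namespace EsTam

/-- A cell `(i, j)`: `i` is the row index, `j` the column index. -/
abbrev Cell := ℕ × ℕ

/-- Membership in the staircase shape of size `n`: rows `1` and `2` consist of the
cells `(i, j)` with `1 ≤ j ≤ n`, and row `i` for `3 ≤ i ≤ n` consists of the cells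
`(i, j)` with `i - 1 ≤ j ≤ n`. -/
def IsCell (n : ℕ) (c : Cell) : Prop :=
  1 ≤ c.1 ∧ c.1 ≤ n ∧ 1 ≤ c.2 ∧ c.2 ≤ n ∧ (c.1 ≤ 2 ∨ c.1 - 1 ≤ c.2)

/-- The root cell `(1, n)`. -/
def root (n : ℕ) : Cell := (1, n)

/-- The border cells `(i, i - 1)` for `2 ≤ i ≤ n`. -/
def IsBorder (n : ℕ) (c : Cell) : Prop :=
  2 ≤ c.1 ∧ c.1 ≤ n ∧ c.2 = c.1 - 1

/-- An fb-tableau of size `n`: a set of cells of the staircase shape containing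
the root and all border cells, and such that every cell other than the root has a
cell of the tableau strictly to its left in its row (same `i`, larger `j`) or
strictly above it in its column (same `j`, smaller `i`). -/
structure FB (n : ℕ) where
  cells : Set Cell
  isCell_of_mem : ∀ c ∈ cells, IsCell n c
  root_mem : root n ∈ cells
  border_mem : ∀ c : Cell, IsBorder n c → c ∈ cells
  supported : ∀ c ∈ cells, c ≠ root n →
    (∃ j', c.2 < j' ∧ ((c.1, j') : Cell) ∈ cells) ∨
    (∃ i', i' < c.1 ∧ ((i', c.2) : Cell) ∈ cells)

variable {n : ℕ}

/-- `c` is a left-arrow of `T`: a cell of `T`, other than the root, with no cell of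
`T` strictly to its left in its row. -/
def IsLeftArrow (T : FB n) (c : Cell) : Prop :=
  c ∈ T.cells ∧ c ≠ root n ∧ ∀ j', c.2 < j' → ((c.1, j') : Cell) ∉ T.cells

/-- `c` is an up-arrow of `T`: a cell of `T`, other than the root, with no cell of
`T` strictly above it in its column. -/
def IsUpArrow (T : FB n) (c : Cell) : Prop :=
  c ∈ T.cells ∧ c ≠ root n ∧ ∀ i', i' < c.1 → ((i', c.2) : Cell) ∉ T.cells

/-- The row space of `T`: cells lying, in their row, weakly to the right of the
root or of a left-arrow of `T`. -/
def RowSp (T : FB n) : Set Cell :=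
  {c | IsCell n c ∧ ∃ j', c.2 ≤ j' ∧
    (((c.1, j') : Cell) = root n ∨ IsLeftArrow T (c.1, j'))}

/-- The column space of `T`: cells lying, in their column, weakly below the root or
an up-arrow of `T`. -/
def ColSp (T : FB n) : Set Cell :=
  {c | IsCell n c ∧ ∃ i', i' ≤ c.1 ∧
    (((i', c.2) : Cell) = root n ∨ IsUpArrow T (i', c.2))}

/-- `c` is a free cell of `T`: it lies strictly below the up-arrow of `T` in its
column and strictly to the right of the left-arrow of `T` in its row. -/
def IsFree (T : FB n) (c : Cell) : Prop :=
  IsCell n c ∧ (∃ i', i' < c.1 ∧ IsUpArrow T (i', c.2)) ∧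
    (∃ j', c.2 < j' ∧ IsLeftArrow T (c.1, j'))

/-- The relation `S ⊲ T` on fb-tableaux of size `n`. -/
def Lhd (S T : FB n) : Prop :=
  ColSp S ⊆ ColSp T ∧ RowSp T ⊆ RowSp S ∧
    ∀ c : Cell, IsFree S c → IsFree T c → c ∈ S.cells → c ∈ T.cells

/-- `T` covers `S` in `esTam n`. -/
def CovRel (S T : FB n) : Prop :=
  Lhd S T ∧ S ≠ T ∧ ∀ U : FB n, Lhd S U → Lhd U T → U = S ∨ U = T

/-- `m` is the greatest lower bound of `x` and `y` in `esTam n`. -/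
def IsMeet (x y m : FB n) : Prop :=
  Lhd m x ∧ Lhd m y ∧ ∀ t : FB n, Lhd t x → Lhd t y → Lhd t m

/-- `j` is the least upper bound of `x` and `y` in `esTam n`. -/
def IsJoin (x y j : FB n) : Prop :=
  Lhd x j ∧ Lhd y j ∧ ∀ t : FB n, Lhd x t → Lhd y t → Lhd j t

/-- `T` is join-irreducible: it covers exactly one element. -/
def JoinIrr (T : FB n) : Prop := ∃! S : FB n, CovRel S T

/-- `T` is meet-irreducible: it is covered by exactly one element. -/
def MeetIrr (T : FB n) : Prop := ∃! S : FB n, CovRel T S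

/-- A strict chain `f 0 ⊲ f 1 ⊲ ⋯ ⊲ f m` of length `m`. -/
def IsStrictChain {m : ℕ} (f : Fin (m + 1) → FB n) : Prop :=
  ∀ i j : Fin (m + 1), i < j → Lhd (f i) (f j) ∧ f i ≠ f j

/-- `T` is small: every cell of `T` other than the root is an arrow. -/
def IsSmall (T : FB n) : Prop :=
  ∀ c ∈ T.cells, c ≠ root n → IsLeftArrow T c ∨ IsUpArrow T c

/-- `T` is binary: `T` has no free cells. -/
def IsBinary (T : FB n) : Prop := ∀ c : Cell, ¬ IsFree T c

/-- `c` lies strictly above the up-arrow of `T` in its column. -/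
def PointedUp (T : FB n) (c : Cell) : Prop :=
  ∃ i', c.1 < i' ∧ IsUpArrow T (i', c.2)

/-- `c` is pointed by a left-arrow of `T`: it lies strictly to the left of the
left-arrow of `T` in its row. -/
def PointedLeft (T : FB n) (c : Cell) : Prop :=
  ∃ j', j' < c.2 ∧ IsLeftArrow T (c.1, j')

end EsTam

namespace EsTam

/-- `T` is obtained from `S` by a move of type I: a changeable up-arrow `u` of `S`
moves to the nearest cell `c` strictly above it in its column that is not pointed
by a left-arrow of `S`; the new tableau is `(S ∪ {c}) \ {u}` if `u` is not a border
cell, and `S ∪ {c}` if `u` is a border cell. -/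
def MoveI (n : ℕ) (S T : FB n) : Prop :=
  ∃ u c : Cell, IsUpArrow S u ∧ c.2 = u.2 ∧ c.1 < u.1 ∧ IsCell n c ∧
    ¬ PointedLeft S c ∧
    (∀ i', c.1 < i' → i' < u.1 → PointedLeft S (i', u.2)) ∧
    ((¬ IsBorder n u ∧ T.cells = (S.cells ∪ {c}) \ {u}) ∨
     (IsBorder n u ∧ T.cells = S.cells ∪ {c}))

/-- `T` is obtained from `S` by a move of type II: a changeable left-arrow `ℓ` of
`S` (one whose nearest free cell strictly to its right exists and belongs to `S`)
is removed. -/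
def MoveII (n : ℕ) (S T : FB n) : Prop :=
  ∃ l m : Cell, IsLeftArrow S l ∧ m.1 = l.1 ∧ m.2 < l.2 ∧ IsFree S m ∧
    m ∈ S.cells ∧ (∀ j', m.2 < j' → j' < l.2 → ¬ IsFree S (l.1, j')) ∧
    T.cells = S.cells \ {l}

/-- `T` is obtained from `S` by a move of type III: a dot is inserted in an empty
free cell of `S`. -/
def MoveIII (n : ℕ) (S T : FB n) : Prop :=
  ∃ c : Cell, IsFree S c ∧ c ∉ S.cells ∧ T.cells = S.cells ∪ {c}

section Basics

variable {n : ℕ}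

theorem FB.ext' {A B : FB n} (h : A.cells = B.cells) : A = B := by
  cases A; cases B; cases h; rfl

/-- maximal column of a dot in row `i` (0 if none). -/
noncomputable def rMax (A : Set Cell) (n i : ℕ) : ℕ :=
  Nat.findGreatest (fun j => ((i, j) : Cell) ∈ A) n

/-- minimal row of a dot in column `j` (0 if none). -/
noncomputable def cMin (A : Set Cell) (j : ℕ) : ℕ :=
  sInf {i | ((i, j) : Cell) ∈ A}

theorem rMax_eq_of {A : Set Cell} {i m : ℕ} (h1 : ((i, m) : Cell) ∈ A) (h2 : m ≤ n)
    (h3 : ∀ j, ((i, j) : Cell) ∈ A → j ≤ m) : rMax A n i = m := by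
  unfold rMax
  refine le_antisymm ?_ (Nat.le_findGreatest h2 h1)
  by_contra hlt
  push_neg at hlt
  have := Nat.findGreatest_spec (P := fun j => ((i, j) : Cell) ∈ A) (n := n) h2 h1
  exact absurd (h3 _ this) (by omega)

theorem cMin_eq_of {A : Set Cell} {j m : ℕ} (h1 : ((m, j) : Cell) ∈ A)
    (h3 : ∀ i, ((i, j) : Cell) ∈ A → m ≤ i) : cMin A j = m := by
  unfold cMin
  have hmem : sInf {i | ((i, j) : Cell) ∈ A} ∈ {i | ((i, j) : Cell) ∈ A} :=
    Nat.sInf_mem ⟨m, h1⟩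
  exact le_antisymm (Nat.sInf_le h1) (h3 _ hmem)

theorem le_rMax {T : FB n} {i j : ℕ} (h : ((i, j) : Cell) ∈ T.cells) :
    j ≤ rMax T.cells n i :=
  Nat.le_findGreatest (T.isCell_of_mem _ h).2.2.2.1 h

theorem cMin_le {T : FB n} {i j : ℕ} (h : ((i, j) : Cell) ∈ T.cells) :
    cMin T.cells j ≤ i := Nat.sInf_le h

theorem border_mem' (T : FB n) {i : ℕ} (h2 : 2 ≤ i) (hn : i ≤ n) :
    ((i, i - 1) : Cell) ∈ T.cells :=
  T.border_mem _ ⟨h2, hn, rfl⟩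

theorem rowMax_mem (T : FB n) {i : ℕ} (h2 : 2 ≤ i) (hn : i ≤ n) :
    ((i, rMax T.cells n i) : Cell) ∈ T.cells :=
  Nat.findGreatest_spec (P := fun j => ((i, j) : Cell) ∈ T.cells) (n := n) (m := i - 1)
    (by omega) (border_mem' T h2 hn)

theorem colMin_mem (T : FB n) {j : ℕ} (h1 : 1 ≤ j) (hn : j ≤ n) :
    ((cMin T.cells j, j) : Cell) ∈ T.cells := by
  rcases eq_or_lt_of_le hn with h | h
  · subst h
    exact Nat.sInf_mem (s := {i | ((i, j) : Cell) ∈ T.cells}) ⟨1, T.root_mem⟩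
  · exact Nat.sInf_mem (s := {i | ((i, j) : Cell) ∈ T.cells})
      ⟨j + 1, by simpa using border_mem' T (i := j + 1) (by omega) (by omega)⟩

theorem rowMax1 (T : FB n) (hn : 1 ≤ n) : rMax T.cells n 1 = n :=
  rMax_eq_of T.root_mem le_rfl (fun j hj => (T.isCell_of_mem _ hj).2.2.2.1)

theorem root_ne_iff {c : Cell} : c ≠ root n ↔ c.1 ≠ 1 ∨ c.2 ≠ n := by
  rw [root, Ne, Prod.ext_iff]
  tauto

theorem isLeftArrow_iff {T : FB n} {c : Cell} :
    IsLeftArrow T c ↔ 2 ≤ c.1 ∧ c.1 ≤ n ∧ c.2 = rMax T.cells n c.1 := by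
  obtain ⟨i, j⟩ := c
  constructor
  · rintro ⟨hm, hr, hl⟩
    have hic := T.isCell_of_mem _ hm
    rw [root_ne_iff] at hr
    have h1 : 2 ≤ i := by
      rcases Nat.lt_or_ge i 2 with h | h
      · exfalso
        have hi1 : i = 1 := by
          have := hic.1; omega
        subst hi1
        have hjn : j < n := by
          simp only [Nat.lt_irrefl] at hr
          have := hic.2.2.2.1
          rcases hr with hr | hr
          · exact absurd rfl hr
          · omega
        exact hl n hjn T.root_mem
      · exact h
    refine ⟨h1, hic.2.1, le_antisymm (le_rMax hm) ?_⟩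
    by_contra hgt
    push_neg at hgt
    exact hl _ hgt (rowMax_mem T h1 hic.2.1)
  · rintro ⟨h1, h2, h3⟩
    simp only at h1 h2 h3
    subst h3
    refine ⟨rowMax_mem T h1 h2, ?_, fun j' hj' hmem => ?_⟩
    · rw [root_ne_iff]; left; simp; omega
    · have h4 : j' ≤ rMax T.cells n i := le_rMax hmem
      simp only at hj'; omega

theorem isUpArrow_iff {T : FB n} {c : Cell} :
    IsUpArrow T c ↔ 1 ≤ c.2 ∧ c.2 < n ∧ c.1 = cMin T.cells c.2 := by
  obtain ⟨i, j⟩ := c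
  constructor
  · rintro ⟨hm, hr, hu⟩
    have hic := T.isCell_of_mem _ hm
    rw [root_ne_iff] at hr
    have h2 : j < n := by
      rcases eq_or_lt_of_le hic.2.2.2.1 with he | h
      · exfalso
        simp only at he
        subst he
        rcases Nat.lt_or_ge 1 i with h | h
        · exact hu 1 h T.root_mem
        · have : i = 1 := by have := hic.1; omega
          simp [this] at hr
      · exact h
    refine ⟨hic.2.2.1, h2, le_antisymm ?_ (cMin_le hm)⟩
    by_contra hgt
    push_neg at hgt
    exact hu _ hgt (colMin_mem T hic.2.2.1 (by omega))
  · rintro ⟨h1, h2, h3⟩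
    simp only at h1 h2 h3
    subst h3
    refine ⟨colMin_mem T h1 (by omega), ?_, fun i' hi' hmem => ?_⟩
    · rw [root_ne_iff]; right; simp; omega
    · have h4 : cMin T.cells j ≤ i' := cMin_le hmem
      simp only at hi'; omega

end Basics
section Chars

variable {n : ℕ}

theorem isFree_iff {T : FB n} {c : Cell} :
    IsFree T c ↔ IsCell n c ∧ 2 ≤ c.1 ∧ c.2 < n ∧ cMin T.cells c.2 < c.1 ∧
      c.2 < rMax T.cells n c.1 := by
  obtain ⟨i, j⟩ := c
  constructor
  · rintro ⟨hic, ⟨i', hi', hu⟩, ⟨j', hj', hl⟩⟩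
    rw [isUpArrow_iff] at hu
    rw [isLeftArrow_iff] at hl
    simp only at *
    refine ⟨hic, by omega, by omega, by omega, by omega⟩
  · rintro ⟨hic, h1, h2, h3, h4⟩
    simp only at *
    refine ⟨hic, ⟨cMin T.cells j, h3, ?_⟩, ⟨rMax T.cells n i, h4, ?_⟩⟩
    · rw [isUpArrow_iff]
      exact ⟨hic.2.2.1, h2, rfl⟩
    · rw [isLeftArrow_iff]
      exact ⟨h1, hic.2.1, rfl⟩

theorem mem_rowSp_iff {T : FB n} {c : Cell} (hn : 1 ≤ n) :
    c ∈ RowSp T ↔ IsCell n c ∧ (c.1 = 1 ∨ c.2 ≤ rMax T.cells n c.1) := by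
  obtain ⟨i, j⟩ := c
  constructor
  · rintro ⟨hic, j', hj', hroot | hla⟩
    · refine ⟨hic, Or.inl ?_⟩
      have : i = 1 := congrArg Prod.fst hroot
      exact this
    · rw [isLeftArrow_iff] at hla
      have h5 : j' = rMax T.cells n i := hla.2.2
      simp only at hj'
      show IsCell n (i, j) ∧ (i = 1 ∨ j ≤ rMax T.cells n i)
      exact ⟨hic, Or.inr (by omega)⟩
  · rintro ⟨hic, h1 | h2⟩
    · simp only at h1
      subst h1
      exact ⟨hic, n, hic.2.2.2.1, Or.inl rfl⟩
    · have h2i : 2 ≤ i ∨ i = 1 := by have := hic.1; omega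
      rcases h2i with h2i | h2i
    -- i ≥ 2 : use the left arrow
      · exact ⟨hic, rMax T.cells n i, h2, Or.inr (isLeftArrow_iff.2 ⟨h2i, hic.2.1, rfl⟩)⟩
      · subst h2i
        exact ⟨hic, n, hic.2.2.2.1, Or.inl rfl⟩

theorem mem_colSp_iff {T : FB n} {c : Cell} :
    c ∈ ColSp T ↔ IsCell n c ∧ (c.2 = n ∨ cMin T.cells c.2 ≤ c.1) := by
  obtain ⟨i, j⟩ := c
  constructor
  · rintro ⟨hic, i', hi', hroot | hua⟩
    · refine ⟨hic, Or.inl ?_⟩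
      have : j = n := congrArg Prod.snd hroot
      exact this
    · rw [isUpArrow_iff] at hua
      have h5 : i' = cMin T.cells j := hua.2.2
      simp only at hi'
      show IsCell n (i, j) ∧ (j = n ∨ cMin T.cells j ≤ i)
      exact ⟨hic, Or.inr (by omega)⟩
  · rintro ⟨hic, h1 | h2⟩
    · simp only at h1
      subst h1
      exact ⟨hic, 1, hic.1, Or.inl rfl⟩
    · have h2j : j < n ∨ j = n := by have := hic.2.2.2.1; omega
      rcases h2j with h2j | h2j
      · exact ⟨hic, cMin T.cells j, h2, Or.inr (isUpArrow_iff.2 ⟨hic.2.2.1, h2j, rfl⟩)⟩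
      · subst h2j
        exact ⟨hic, 1, hic.1, Or.inl rfl⟩

theorem rowSp_subset_iff {S T : FB n} (hn : 1 ≤ n) :
    RowSp T ⊆ RowSp S ↔ ∀ i, 2 ≤ i → i ≤ n → rMax T.cells n i ≤ rMax S.cells n i := by
  constructor
  · intro h i h2 hin
    have hmem : ((i, rMax T.cells n i) : Cell) ∈ RowSp T := by
      rw [mem_rowSp_iff hn]
      exact ⟨T.isCell_of_mem _ (rowMax_mem T h2 hin), Or.inr le_rfl⟩
    have := (mem_rowSp_iff hn).1 (h hmem)
    simp only at this
    rcases this.2 with h1 | h1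
    · omega
    · exact h1
  · intro h c hc
    rw [mem_rowSp_iff hn] at hc ⊢
    refine ⟨hc.1, ?_⟩
    rcases hc.2 with h1 | h1
    · exact Or.inl h1
    · rcases Nat.lt_or_ge c.1 2 with h2 | h2
      · left; have := hc.1.1; omega
      · right; exact le_trans h1 (h c.1 h2 hc.1.2.1)

theorem colSp_subset_iff {S T : FB n} :
    ColSp S ⊆ ColSp T ↔ ∀ j, 1 ≤ j → j < n → cMin T.cells j ≤ cMin S.cells j := by
  constructor
  · intro h j h1 hjn
    have hmem : ((cMin S.cells j, j) : Cell) ∈ ColSp S := by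
      rw [mem_colSp_iff]
      exact ⟨S.isCell_of_mem _ (colMin_mem S h1 (by omega)), Or.inr le_rfl⟩
    have := (mem_colSp_iff).1 (h hmem)
    simp only at this
    rcases this.2 with h2 | h2
    · omega
    · exact h2
  · intro h c hc
    rw [mem_colSp_iff] at hc ⊢
    refine ⟨hc.1, ?_⟩
    rcases hc.2 with h1 | h1
    · exact Or.inl h1
    · rcases Nat.lt_or_ge c.2 n with h2 | h2
      · right; exact le_trans (h c.2 hc.1.2.2.1 h2) h1
      · left; have := hc.1.2.2.2.1; omega

theorem lhd_iff {S T : FB n} (hn : 1 ≤ n) :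
    Lhd S T ↔ (∀ j, 1 ≤ j → j < n → cMin T.cells j ≤ cMin S.cells j) ∧
      (∀ i, 2 ≤ i → i ≤ n → rMax T.cells n i ≤ rMax S.cells n i) ∧
      (∀ c : Cell, IsFree S c → IsFree T c → c ∈ S.cells → c ∈ T.cells) := by
  rw [Lhd, colSp_subset_iff, rowSp_subset_iff hn]

theorem not_both {T : FB n} {c : Cell} (hl : IsLeftArrow T c) (hu : IsUpArrow T c) : False := by
  rcases T.supported c hl.1 hl.2.1 with ⟨j', hj', hm⟩ | ⟨i', hi', hm⟩
  · exact hl.2.2 j' hj' hm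
  · exact hu.2.2 i' hi' hm

theorem la_above {T : FB n} {c : Cell} (hl : IsLeftArrow T c) :
    ∃ i', i' < c.1 ∧ ((i', c.2) : Cell) ∈ T.cells := by
  rcases T.supported c hl.1 hl.2.1 with ⟨j', hj', hm⟩ | ⟨i', hi', hm⟩
  · exact absurd hm (hl.2.2 j' hj')
  · exact ⟨i', hi', hm⟩

theorem cMin_lt_of_la {T : FB n} {c : Cell} (hl : IsLeftArrow T c) :
    cMin T.cells c.2 < c.1 := by
  obtain ⟨i', hi', hm⟩ := la_above hl
  exact lt_of_le_of_lt (cMin_le hm) hi'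

theorem ua_left {T : FB n} {c : Cell} (hu : IsUpArrow T c) :
    ∃ j', c.2 < j' ∧ ((c.1, j') : Cell) ∈ T.cells := by
  rcases T.supported c hu.1 hu.2.1 with ⟨j', hj', hm⟩ | ⟨i', hi', hm⟩
  · exact ⟨j', hj', hm⟩
  · exact absurd hm (hu.2.2 i' hi')

theorem lt_rMax_of_ua {T : FB n} {c : Cell} (hu : IsUpArrow T c) :
    c.2 < rMax T.cells n c.1 := by
  obtain ⟨j', hj', hm⟩ := ua_left hu
  exact lt_of_lt_of_le hj' (le_rMax hm)

/-- classification : every dot is the root, an arrow, or a free cell. -/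
theorem mem_cases {T : FB n} {c : Cell} (hc : c ∈ T.cells) :
    c = root n ∨ IsLeftArrow T c ∨ IsUpArrow T c ∨ IsFree T c := by
  by_cases hroot : c = root n
  · exact Or.inl hroot
  by_cases hla : IsLeftArrow T c
  · exact Or.inr (Or.inl hla)
  by_cases hua : IsUpArrow T c
  · exact Or.inr (Or.inr (Or.inl hua))
  refine Or.inr (Or.inr (Or.inr ?_))
  have hic := T.isCell_of_mem _ hc
  -- c is not a left arrow : something strictly to its left
  have hleft : ∃ j', c.2 < j' ∧ ((c.1, j') : Cell) ∈ T.cells := by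
    by_contra hcon
    push_neg at hcon
    exact hla ⟨hc, hroot, fun j' hj' hm => (hcon j' hj' hm).elim⟩
  have hup : ∃ i', i' < c.1 ∧ ((i', c.2) : Cell) ∈ T.cells := by
    by_contra hcon
    push_neg at hcon
    exact hua ⟨hc, hroot, fun i' hi' hm => (hcon i' hi' hm).elim⟩
  obtain ⟨j', hj', hmj⟩ := hleft
  obtain ⟨i', hi', hmi⟩ := hup
  have h2 : 2 ≤ c.1 := by
    have := (T.isCell_of_mem _ hmi).1
    omega
  rw [isFree_iff]
  have hjn : c.2 < n := by
    have h1 := le_rMax (show ((c.1, j') : Cell) ∈ T.cells from hmj)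
    have h2' : rMax T.cells n c.1 ≤ n := Nat.findGreatest_le n
    omega
  refine ⟨hic, h2, hjn, ?_, ?_⟩
  · exact lt_of_le_of_lt (cMin_le hmi) hi'
  · exact lt_of_lt_of_le hj' (le_rMax hmj)

theorem isFree_not_la {T : FB n} {c : Cell} (hf : IsFree T c) : ¬ IsLeftArrow T c := by
  intro hla
  rw [isFree_iff] at hf
  rw [isLeftArrow_iff] at hla
  omega

theorem isFree_not_ua {T : FB n} {c : Cell} (hf : IsFree T c) : ¬ IsUpArrow T c := by
  intro hua
  rw [isFree_iff] at hf
  rw [isUpArrow_iff] at hua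
  omega

theorem isFree_ne_root {T : FB n} {c : Cell} (hf : IsFree T c) : c ≠ root n := by
  intro h
  rw [isFree_iff] at hf
  have h1 : c.1 = 1 := congrArg Prod.fst h
  omega

/-- If `A` and `B` have the same arrows, and free dots of `A` are dots of `B`,
then `A ⊆ B`. -/
theorem cells_subset_of {A B : FB n}
    (hr : ∀ i, 2 ≤ i → i ≤ n → rMax A.cells n i = rMax B.cells n i)
    (hc : ∀ j, 1 ≤ j → j < n → cMin A.cells j = cMin B.cells j)
    (hf : ∀ x : Cell, IsFree A x → x ∈ A.cells → x ∈ B.cells) :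
    A.cells ⊆ B.cells := by
  intro x hx
  rcases mem_cases hx with hroot | hla | hua | hfree
  · rw [hroot]; exact B.root_mem
  · rw [isLeftArrow_iff] at hla
    have : x = (x.1, rMax B.cells n x.1) := by
      rw [← hr x.1 hla.1 hla.2.1, ← hla.2.2]
    rw [this]
    exact rowMax_mem B hla.1 hla.2.1
  · rw [isUpArrow_iff] at hua
    have : x = (cMin B.cells x.2, x.2) := by
      rw [← hc x.2 hua.1 (by omega), ← hua.2.2]
    rw [this]
    exact colMin_mem B hua.1 (by omega)
  · exact hf x hfree hx

theorem isFree_congr {A B : FB n} {x : Cell}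
    (hr : 2 ≤ x.1 → x.1 ≤ n → rMax A.cells n x.1 = rMax B.cells n x.1)
    (hc : 1 ≤ x.2 → x.2 < n → cMin A.cells x.2 = cMin B.cells x.2) :
    IsFree A x ↔ IsFree B x := by
  rw [isFree_iff, isFree_iff]
  constructor
  · rintro ⟨hic, h1, h2, h3, h4⟩
    rw [hr h1 hic.2.1] at h4
    rw [hc hic.2.2.1 h2] at h3
    exact ⟨hic, h1, h2, h3, h4⟩
  · rintro ⟨hic, h1, h2, h3, h4⟩
    rw [← hr h1 hic.2.1] at h4
    rw [← hc hic.2.2.1 h2] at h3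
    exact ⟨hic, h1, h2, h3, h4⟩

end Chars
section MoveIIIcov

variable {n : ℕ}

theorem insert_free_rMax {S : FB n} {A : Set Cell} {c : Cell} (hf : IsFree S c)
    (heq : A = S.cells ∪ {c}) :
    ∀ i, 2 ≤ i → i ≤ n → rMax A n i = rMax S.cells n i := by
  intro i h2 hin
  rw [isFree_iff] at hf
  refine rMax_eq_of ?_ (Nat.findGreatest_le n) ?_
  · rw [heq]; exact Or.inl (rowMax_mem S h2 hin)
  · intro j hj
    rw [heq] at hj
    rcases hj with hj | hj
    · exact le_rMax hj
    · have hj' : ((i, j) : Cell) = c := hj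
      have h1 : i = c.1 := congrArg Prod.fst hj'
      have h2' : j = c.2 := congrArg Prod.snd hj'
      subst h1; rw [h2']
      exact le_of_lt hf.2.2.2.2

theorem insert_free_cMin {S : FB n} {A : Set Cell} {c : Cell} (hf : IsFree S c)
    (heq : A = S.cells ∪ {c}) :
    ∀ j, 1 ≤ j → j ≤ n → cMin A j = cMin S.cells j := by
  intro j h1 hjn
  rw [isFree_iff] at hf
  refine cMin_eq_of ?_ ?_
  · rw [heq]; exact Or.inl (colMin_mem S h1 hjn)
  · intro i hi
    rw [heq] at hi
    rcases hi with hi | hi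
    · exact cMin_le hi
    · have hi' : ((i, j) : Cell) = c := hi
      have h2 : i = c.1 := congrArg Prod.fst hi'
      have h3 : j = c.2 := congrArg Prod.snd hi'
      subst h3; rw [h2]
      exact le_of_lt hf.2.2.2.1

theorem moveIII_cov {S T : FB n} (hn : 1 ≤ n) (h : MoveIII n S T) : CovRel S T := by
  obtain ⟨c, hf, hcnot, heq⟩ := h
  have hrM := insert_free_rMax hf heq
  have hcM := insert_free_cMin hf heq
  have hfree : ∀ x : Cell, IsFree T x ↔ IsFree S x := by
    intro x
    exact isFree_congr (fun h2 hn' => hrM x.1 h2 hn') (fun h1 h2 => hcM x.2 h1 (by omega))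
  have hsub : S.cells ⊆ T.cells := by rw [heq]; exact Set.subset_union_left
  refine ⟨?_, ?_, ?_⟩
  · rw [lhd_iff hn]
    exact ⟨fun j h1 h2 => (hcM j h1 (by omega)).le, fun i h1 h2 => (hrM i h1 h2).le,
      fun x _ _ hx => hsub hx⟩
  · intro hST
    rw [hST] at hcnot
    exact hcnot (by rw [heq]; exact Or.inr rfl)
  · intro U hSU hUT
    rw [lhd_iff hn] at hSU hUT
    have hrU : ∀ i, 2 ≤ i → i ≤ n → rMax U.cells n i = rMax S.cells n i := by
      intro i h1 h2
      have := hSU.2.1 i h1 h2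
      have := hUT.2.1 i h1 h2
      have := hrM i h1 h2
      omega
    have hcU : ∀ j, 1 ≤ j → j < n → cMin U.cells j = cMin S.cells j := by
      intro j h1 h2
      have := hSU.1 j h1 h2
      have := hUT.1 j h1 h2
      have := hcM j h1 (by omega)
      omega
    have hfreeU : ∀ x : Cell, IsFree U x ↔ IsFree S x := by
      intro x
      exact isFree_congr (fun h2 hn' => hrU x.1 h2 hn') (fun h1 h2 => hcU x.2 h1 h2)
    have hSsubU : S.cells ⊆ U.cells :=
      cells_subset_of (fun i a b => (hrU i a b).symm) (fun j a b => (hcU j a b).symm)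
        (fun x hx hxm => hSU.2.2 x hx ((hfreeU x).2 hx) hxm)
    have hUsubT : U.cells ⊆ T.cells :=
      cells_subset_of (fun i a b => (hrU i a b).trans (hrM i a b).symm)
        (fun j a b => (hcU j a b).trans (hcM j a (by omega)).symm)
        (fun x hx hxm => hUT.2.2 x hx ((hfree x).2 ((hfreeU x).1 hx)) hxm)
    by_cases hcu : c ∈ U.cells
    · right
      refine FB.ext' (Set.Subset.antisymm hUsubT ?_)
      rw [heq]
      rintro x (hx | hx)
      · exact hSsubU hx
      · rw [hx]; exact hcu
    · left
      refine FB.ext' (Set.Subset.antisymm ?_ hSsubU)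
      intro x hx
      have := hUsubT hx
      rw [heq] at this
      rcases this with h | h
      · exact h
      · rw [h] at hx; exact absurd hx hcu

end MoveIIIcov
section MoveIIcov

variable {n : ℕ}

theorem free_mono {S T : FB n} {x : Cell}
    (hr : 2 ≤ x.1 → x.1 ≤ n → rMax T.cells n x.1 ≤ rMax S.cells n x.1)
    (hc : 1 ≤ x.2 → x.2 < n → cMin S.cells x.2 ≤ cMin T.cells x.2)
    (h : IsFree T x) : IsFree S x := by
  rw [isFree_iff] at h ⊢
  obtain ⟨hic, h1, h2, h3, h4⟩ := h
  have := hr h1 hic.2.1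
  have := hc hic.2.2.1 h2
  exact ⟨hic, h1, h2, by omega, by omega⟩

theorem moveII_cov {S T : FB n} (hn : 1 ≤ n) (h : MoveII n S T) : CovRel S T := by
  obtain ⟨⟨i0, r⟩, ⟨m1, f⟩, hla, hm1, hmf, hfree, hmS, hgap, heq⟩ := h
  simp only at hm1 hmf hgap
  have hm1' : m1 = i0 := hm1
  rw [hm1'] at hfree hmS
  have hTsub : T.cells ⊆ S.cells := by rw [heq]; exact Set.diff_subset
  have hlmem : ((i0, r) : Cell) ∈ S.cells := hla.1
  have hi0 : 2 ≤ i0 := (isLeftArrow_iff.1 hla).1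
  have hi0n : i0 ≤ n := (isLeftArrow_iff.1 hla).2.1
  have hrS : r = rMax S.cells n i0 := (isLeftArrow_iff.1 hla).2.2
  have hrn : r ≤ n := (S.isCell_of_mem _ hlmem).2.2.2.1
  have hf1 : 1 ≤ f := (S.isCell_of_mem _ hmS).2.2.1
  have hmT : ((i0, f) : Cell) ∈ T.cells := by
    rw [heq]
    exact ⟨hmS, by simp [Prod.ext_iff]; omega⟩
  -- row maxima of T
  have hrT0 : rMax T.cells n i0 = f := by
    set m2 := rMax T.cells n i0 with hm2
    have hm2T : ((i0, m2) : Cell) ∈ T.cells := rowMax_mem T hi0 hi0n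
    have hm2S : ((i0, m2) : Cell) ∈ S.cells := hTsub hm2T
    have hge : f ≤ m2 := le_rMax hmT
    have hne : m2 ≠ r := by
      intro hc
      rw [heq] at hm2T
      exact hm2T.2 (by simp [Prod.ext_iff, hc])
    have hlt : m2 < r := by
      have := le_rMax hm2S
      omega
    rcases eq_or_lt_of_le hge with hgood | hbad
    · omega
    exfalso
    rcases mem_cases hm2S with hroot | hlaS | huaS | hfreeS
    · have : i0 = 1 := congrArg Prod.fst hroot
      omega
    · have := (isLeftArrow_iff.1 hlaS).2.2
      simp only at this
      omega
    · -- up arrow of S at (i0, m2), but it is also a left arrow of T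
      refine not_both (T := T) (c := ((i0, m2) : Cell)) ?_ ?_
      · exact isLeftArrow_iff.2 ⟨hi0, hi0n, rfl⟩
      · obtain ⟨_, hr2, hu2⟩ := huaS
        exact ⟨hm2T, hr2, fun i' hi' hmm => hu2 i' hi' (hTsub hmm)⟩
    · exact hgap m2 hbad hlt hfreeS
  have hgapS : ∀ j, f < j → j < r → ((i0, j) : Cell) ∉ S.cells := by
    intro j h1 h2 hmem
    have : ((i0, j) : Cell) ∈ T.cells := by
      rw [heq]
      exact ⟨hmem, by simp [Prod.ext_iff]; omega⟩
    have := le_rMax this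
    omega
  have hrT : ∀ i, 2 ≤ i → i ≤ n → i ≠ i0 → rMax T.cells n i = rMax S.cells n i := by
    intro i h2 hin hne
    refine rMax_eq_of ?_ (Nat.findGreatest_le n) (fun j hj => le_rMax (hTsub hj))
    rw [heq]
    exact ⟨rowMax_mem S h2 hin, by simp [Prod.ext_iff]; omega⟩
  have hcT : ∀ j, 1 ≤ j → j ≤ n → cMin T.cells j = cMin S.cells j := by
    intro j h1 hjn
    refine cMin_eq_of ?_ (fun i hi => cMin_le (hTsub hi))
    rw [heq]
    refine ⟨colMin_mem S h1 hjn, ?_⟩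
    intro hc
    have hc1 : cMin S.cells j = i0 := congrArg Prod.fst hc
    have hc2 : j = r := congrArg Prod.snd hc
    subst hc2
    have := cMin_lt_of_la hla
    simp only at this
    omega
  have hflS : ¬ IsFree S ((i0, r) : Cell) := fun hf => isFree_not_la hf hla
  refine ⟨?_, ?_, ?_⟩
  · rw [lhd_iff hn]
    refine ⟨fun j a b => (hcT j a (by omega)).le, fun i a b => ?_, fun x hxS hxT hx => ?_⟩
    · by_cases hi : i = i0
      · subst hi; omega
      · exact (hrT i a b hi).le
    · rw [heq]
      refine ⟨hx, ?_⟩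
      intro hxl
      rw [Set.mem_singleton_iff] at hxl
      rw [hxl] at hxS
      exact hflS hxS
  · intro hST
    have : ((i0, r) : Cell) ∈ T.cells := by rw [← hST]; exact hlmem
    rw [heq] at this
    exact this.2 rfl
  · intro U hSU hUT
    rw [lhd_iff hn] at hSU hUT
    have hcU : ∀ j, 1 ≤ j → j < n → cMin U.cells j = cMin S.cells j := by
      intro j h1 h2
      have := hSU.1 j h1 h2
      have := hUT.1 j h1 h2
      have := hcT j h1 (by omega)
      omega
    have hrUi : ∀ i, 2 ≤ i → i ≤ n → i ≠ i0 → rMax U.cells n i = rMax S.cells n i := by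
      intro i a b hne
      have := hSU.2.1 i a b
      have := hUT.2.1 i a b
      have := hrT i a b hne
      omega
    have hb1 : f ≤ rMax U.cells n i0 := by
      have := hUT.2.1 i0 hi0 hi0n
      omega
    have hb2 : rMax U.cells n i0 ≤ r := by
      have := hSU.2.1 i0 hi0 hi0n
      omega
    rcases eq_or_lt_of_le hb2 with hA | hB
    · -- U = S
      left
      have hrU : ∀ i, 2 ≤ i → i ≤ n → rMax U.cells n i = rMax S.cells n i := by
        intro i a b
        by_cases hi : i = i0
        · subst hi; omega
        · exact hrUi i a b hi
      have hfreeU : ∀ x : Cell, IsFree U x ↔ IsFree S x := fun x =>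
        isFree_congr (fun a b => hrU x.1 a b) (fun a b => hcU x.2 a b)
      refine FB.ext' (Set.Subset.antisymm ?_ ?_)
      · refine cells_subset_of (fun i a b => hrU i a b) (fun j a b => hcU j a b) ?_
        intro x hxf hxm
        have hxfS0 : IsFree S x := (hfreeU x).1 hxf
        have hxfS := hxfS0
        by_cases hxT : IsFree T x
        · exact hTsub (hUT.2.2 x hxf hxT hxm)
        · -- x is free in S but not in T : row i0, f ≤ x.2 < r
          rw [isFree_iff] at hxfS hxT
          push_neg at hxT
          have hic := hxfS.1
          have hx1 : x.1 = i0 := by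
            by_contra hne
            have := hrT x.1 hxfS.2.1 hic.2.1 hne
            have := hcT x.2 hic.2.2.1 (by omega)
            obtain ⟨_, a1, a2, a3, a4⟩ := hxfS
            exact absurd (hxT hic a1 a2 (by omega)) (by omega)
          have hx2 : f ≤ x.2 := by
            have := hcT x.2 hic.2.2.1 (by omega)
            obtain ⟨_, a1, a2, a3, a4⟩ := hxfS
            rw [hx1] at hxT
            by_contra hlt
            exact absurd (hxT hic (by omega) a2 (by omega)) (by omega)
          rcases eq_or_lt_of_le hx2 with he | hlt
          · have : x = ((i0, f) : Cell) := by
              rw [Prod.ext_iff]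
              exact ⟨hx1, he.symm⟩
            rw [this]
            exact hmS
          · exfalso
            obtain ⟨_, a1, a2, a3, a4⟩ := hxfS
            rw [hx1] at a4
            have hxx : ((i0, x.2) : Cell) = x := by
              rw [Prod.ext_iff]
              exact ⟨hx1.symm, rfl⟩
            exact hgap x.2 hlt (by omega) (by rw [hxx]; exact hxfS0)
      · refine cells_subset_of (fun i a b => (hrU i a b).symm) (fun j a b => (hcU j a b).symm) ?_
        intro x hxf hxm
        exact hSU.2.2 x hxf ((hfreeU x).2 hxf) hxm
    · -- U = T
      right
      have hrU0 : rMax U.cells n i0 = f := by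
        set m' := rMax U.cells n i0 with hm'
        have hlaU : IsLeftArrow U ((i0, m') : Cell) := isLeftArrow_iff.2 ⟨hi0, hi0n, rfl⟩
        have h1 : cMin U.cells m' < i0 := by
          have := cMin_lt_of_la hlaU
          simpa using this
        have hm'1 : 1 ≤ m' := by omega
        have h2 : cMin S.cells m' < i0 := by
          have := hcU m' hm'1 (by omega)
          omega
        have hfreeSm : IsFree S ((i0, m') : Cell) := by
          rw [isFree_iff]
          refine ⟨U.isCell_of_mem _ (rowMax_mem U hi0 hi0n), hi0, by omega, by simpa using h2, ?_⟩
          simp only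
          omega
        by_contra hne
        have : f < m' := by omega
        exact hgap m' this hB hfreeSm
      have hrU : ∀ i, 2 ≤ i → i ≤ n → rMax U.cells n i = rMax T.cells n i := by
        intro i a b
        by_cases hi : i = i0
        · subst hi; omega
        · rw [hrUi i a b hi, hrT i a b hi]
      have hcU' : ∀ j, 1 ≤ j → j < n → cMin U.cells j = cMin T.cells j := by
        intro j a b
        rw [hcU j a b, hcT j a (by omega)]
      have hfreeUT : ∀ x : Cell, IsFree U x ↔ IsFree T x := fun x =>
        isFree_congr (fun a b => hrU x.1 a b) (fun a b => hcU' x.2 a b)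
      refine FB.ext' (Set.Subset.antisymm ?_ ?_)
      · refine cells_subset_of (fun i a b => hrU i a b) (fun j a b => hcU' j a b) ?_
        intro x hxf hxm
        exact hUT.2.2 x hxf ((hfreeUT x).1 hxf) hxm
      · refine cells_subset_of (fun i a b => (hrU i a b).symm) (fun j a b => (hcU' j a b).symm) ?_
        intro x hxf hxm
        have hxS : x ∈ S.cells := hTsub hxm
        have hxfS : IsFree S x := by
          refine free_mono (S := S) (T := T) ?_ ?_ hxf
          · intro a b
            by_cases hi : x.1 = i0
            · rw [hi]; omega
            · exact (hrT x.1 a b hi).le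
          · intro a b
            exact (hcT x.2 a (by omega)).ge
        exact hSU.2.2 x hxfS ((hfreeUT x).2 hxf) hxS

end MoveIIcov
section MoveIcov

variable {n : ℕ}

theorem moveI_cov {S T : FB n} (hn : 1 ≤ n) (h : MoveI n S T) : CovRel S T := by
  obtain ⟨⟨ui, j0u⟩, ⟨ci, j0⟩, hua, hc2, hclt, hccell, hnp, hbet, hcase⟩ := h
  have hc2' : j0 = j0u := hc2
  subst hc2'
  simp only at hclt hbet
  have hj01 : 1 ≤ j0 := (isUpArrow_iff.1 hua).1
  have hj0n : j0 < n := (isUpArrow_iff.1 hua).2.1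
  have huiMin : ui = cMin S.cells j0 := (isUpArrow_iff.1 hua).2.2
  have hci1 : 1 ≤ ci := hccell.1
  have hcin : ci ≤ n := hccell.2.1
  have hui2 : 2 ≤ ui := by omega
  have huin : ui ≤ n := (S.isCell_of_mem _ hua.1).2.1
  have hcnotS : ((ci, j0) : Cell) ∉ S.cells := hua.2.2 ci hclt
  have hru : j0 < rMax S.cells n ui := lt_rMax_of_ua hua
  have hrc : j0 < rMax S.cells n ci := by
    rcases Nat.lt_or_ge ci 2 with h1 | h1
    · have : ci = 1 := by omega
      rw [this, rowMax1 S hn]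
      exact hj0n
    · have hge : j0 ≤ rMax S.cells n ci := by
        by_contra hlt
        push_neg at hlt
        exact hnp ⟨rMax S.cells n ci, hlt, isLeftArrow_iff.2 ⟨h1, hcin, rfl⟩⟩
      rcases eq_or_lt_of_le hge with he | hlt
      · exact absurd (he ▸ rowMax_mem S h1 hcin) hcnotS
      · exact hlt
  have hUAS : ¬ IsFree S ((ui, j0) : Cell) := fun hf => isFree_not_ua hf hua
  have hcnotfree : ¬ IsFree S ((ci, j0) : Cell) := by
    rw [isFree_iff]
    push_neg
    intro _ _ _
    simp only
    omega
  -- cell membership in T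
  have hmemT : ∀ x : Cell, x ∈ T.cells ↔ (x ∈ S.cells ∨ x = ((ci, j0) : Cell)) ∧
      (IsBorder n ((ui, j0) : Cell) ∨ x ≠ ((ui, j0) : Cell)) := by
    intro x
    rcases hcase with ⟨hb, heq⟩ | ⟨hb, heq⟩
    · rw [heq]
      simp only [Set.mem_diff, Set.mem_union, Set.mem_singleton_iff]
      tauto
    · rw [heq]
      simp only [Set.mem_union, Set.mem_singleton_iff]
      tauto
  have hcneu : ((ci, j0) : Cell) ≠ ((ui, j0) : Cell) := by
    simp only [ne_eq, Prod.mk.injEq]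
    omega
  have hcT : ((ci, j0) : Cell) ∈ T.cells := by
    rw [hmemT]
    exact ⟨Or.inr rfl, by tauto⟩
  have hSmemT : ∀ x : Cell, x ∈ S.cells → x ≠ ((ui, j0) : Cell) → x ∈ T.cells := by
    intro x hx hne
    rw [hmemT]
    exact ⟨Or.inl hx, Or.inr hne⟩
  -- arrows of T
  have hrT : ∀ i, 2 ≤ i → i ≤ n → rMax T.cells n i = rMax S.cells n i := by
    intro i h2 hin
    refine rMax_eq_of ?_ (Nat.findGreatest_le n) ?_
    · refine hSmemT _ (rowMax_mem S h2 hin) ?_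
      intro hcon
      have h1 : i = ui := congrArg Prod.fst hcon
      have h2' : rMax S.cells n i = j0 := congrArg Prod.snd hcon
      rw [h1] at h2'
      omega
    · intro j hj
      rw [hmemT] at hj
      rcases hj.1 with hj1 | hj1
      · exact le_rMax hj1
      · have e1 : i = ci := congrArg Prod.fst hj1
        have e2 : j = j0 := congrArg Prod.snd hj1
        rw [e1, e2]
        omega
  have hcTj : ∀ j, 1 ≤ j → j ≤ n → j ≠ j0 → cMin T.cells j = cMin S.cells j := by
    intro j h1 hjn hne
    refine cMin_eq_of ?_ ?_
    · refine hSmemT _ (colMin_mem S h1 hjn) ?_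
      intro hcon
      exact hne (congrArg Prod.snd hcon)
    · intro i hi
      rw [hmemT] at hi
      rcases hi.1 with hi1 | hi1
      · exact cMin_le hi1
      · exact absurd (congrArg Prod.snd hi1) hne
  have hcT0 : cMin T.cells j0 = ci := by
    refine cMin_eq_of hcT ?_
    intro i hi
    rw [hmemT] at hi
    rcases hi.1 with hi1 | hi1
    · have := cMin_le hi1
      omega
    · have := congrArg Prod.fst hi1
      omega
  have hfreecongr : ∀ x : Cell, x.2 ≠ j0 → (IsFree T x ↔ IsFree S x) := by
    intro x hx
    exact isFree_congr (fun a b => hrT x.1 a b) (fun a b => hcTj x.2 a (by omega) hx)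
  refine ⟨?_, ?_, ?_⟩
  · rw [lhd_iff hn]
    refine ⟨fun j a b => ?_, fun i a b => (hrT i a b).le, fun x hxS hxT hx => ?_⟩
    · by_cases hj : j = j0
      · subst hj
        rw [hcT0, ← huiMin]
        omega
      · exact (hcTj j a (by omega) hj).le
    · refine hSmemT x hx ?_
      intro hcon
      rw [hcon] at hxS
      exact hUAS hxS
  · intro hST
    rw [hST] at hcnotS
    exact hcnotS hcT
  · intro U hSU hUT
    rw [lhd_iff hn] at hSU hUT
    have hcUj : ∀ j, 1 ≤ j → j < n → j ≠ j0 → cMin U.cells j = cMin S.cells j := by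
      intro j a b hne
      have := hSU.1 j a b
      have := hUT.1 j a b
      have := hcTj j a (by omega) hne
      omega
    have hrU : ∀ i, 2 ≤ i → i ≤ n → rMax U.cells n i = rMax S.cells n i := by
      intro i a b
      have := hSU.2.1 i a b
      have := hUT.2.1 i a b
      have := hrT i a b
      omega
    have hb1 : ci ≤ cMin U.cells j0 := by
      have := hUT.1 j0 hj01 hj0n
      omega
    have hb2 : cMin U.cells j0 ≤ ui := by
      have := hSU.1 j0 hj01 hj0n
      omega
    rcases eq_or_lt_of_le hb2 with hA | hB
    · -- U = S
      left
      have hcUall : ∀ j, 1 ≤ j → j < n → cMin U.cells j = cMin S.cells j := by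
        intro j a b
        by_cases hj : j = j0
        · subst hj; omega
        · exact hcUj j a b hj
      have hfreeU : ∀ x : Cell, IsFree U x ↔ IsFree S x := fun x =>
        isFree_congr (fun a b => hrU x.1 a b) (fun a b => hcUall x.2 a b)
      refine FB.ext' (Set.Subset.antisymm ?_ ?_)
      · refine cells_subset_of (fun i a b => hrU i a b) (fun j a b => hcUall j a b) ?_
        intro x hxf hxm
        have hxfS : IsFree S x := (hfreeU x).1 hxf
        have hxfT : IsFree T x := by
          by_cases hj : x.2 = j0
          · rw [isFree_iff] at hxfS ⊢
            obtain ⟨hic, a1, a2, a3, a4⟩ := hxfS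
            refine ⟨hic, a1, a2, ?_, ?_⟩
            · rw [hj, hcT0]
              rw [hj, ← huiMin] at a3
              omega
            · rw [hrT x.1 a1 hic.2.1]
              exact a4
          · exact (hfreecongr x hj).2 hxfS
        have hxT : x ∈ T.cells := hUT.2.2 x hxf hxfT hxm
        rw [hmemT] at hxT
        rcases hxT.1 with h1 | h1
        · exact h1
        · exfalso
          rw [h1] at hxfS
          exact hcnotfree hxfS
      · refine cells_subset_of (fun i a b => (hrU i a b).symm) (fun j a b => (hcUall j a b).symm) ?_
        intro x hxf hxm
        exact hSU.2.2 x hxf ((hfreeU x).2 hxf) hxm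
    · -- U = T
      right
      have hmU : cMin U.cells j0 = ci := by
        set mU := cMin U.cells j0 with hmUdef
        have huaU : IsUpArrow U ((mU, j0) : Cell) := isUpArrow_iff.2 ⟨hj01, hj0n, rfl⟩
        rcases Nat.lt_or_ge mU 2 with h1 | h1
        · omega
        · -- mU ≥ 2 ; it has a dot to its left in U, so its row is not pointed in S
          obtain ⟨j', hj', hmem⟩ := ua_left huaU
          simp only at hj' hmem
          have hle : j' ≤ rMax U.cells n mU := le_rMax hmem
          have : j0 < rMax S.cells n mU := by
            have := hrU mU h1 (U.isCell_of_mem _ hmem).2.1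
            omega
          by_contra hne
          have hbetw : ci < mU ∧ mU < ui := by omega
          obtain ⟨j'', hj'', hla⟩ := hbet mU hbetw.1 hbetw.2
          have := (isLeftArrow_iff.1 hla).2.2
          simp only at this hj''
          omega
      have hcUT : ∀ j, 1 ≤ j → j < n → cMin U.cells j = cMin T.cells j := by
        intro j a b
        by_cases hj : j = j0
        · subst hj; omega
        · rw [hcUj j a b hj, hcTj j a (by omega) hj]
      have hrUT : ∀ i, 2 ≤ i → i ≤ n → rMax U.cells n i = rMax T.cells n i := by
        intro i a b
        rw [hrU i a b, hrT i a b]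
      have hfreeUT : ∀ x : Cell, IsFree U x ↔ IsFree T x := fun x =>
        isFree_congr (fun a b => hrUT x.1 a b) (fun a b => hcUT x.2 a b)
      refine FB.ext' (Set.Subset.antisymm ?_ ?_)
      · refine cells_subset_of (fun i a b => hrUT i a b) (fun j a b => hcUT j a b) ?_
        intro x hxf hxm
        exact hUT.2.2 x hxf ((hfreeUT x).1 hxf) hxm
      · refine cells_subset_of (fun i a b => (hrUT i a b).symm) (fun j a b => (hcUT j a b).symm) ?_
        intro x hxf hxm
        -- x is free in T and a dot of T ; show x is a dot of U
        by_cases hxu : x = ((ui, j0) : Cell)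
        · -- then u is a border cell, present in U
          rw [hmemT] at hxm
          rcases hxm.2 with hbord | hne
          · rw [hxu]
            exact U.border_mem _ hbord
          · exact absurd hxu hne
        · have hxS : x ∈ S.cells := by
            rw [hmemT] at hxm
            rcases hxm.1 with h1 | h1
            · exact h1
            · exfalso
              rw [h1] at hxf
              rw [isFree_iff] at hxf
              obtain ⟨_, _, _, h3, _⟩ := hxf
              simp only at h3
              omega
          have hxfT : IsFree T x := hxf
          have hxfS : IsFree S x := by
            by_cases hj : x.2 = j0
            · rw [isFree_iff] at hxfT ⊢
              obtain ⟨hic, a1, a2, a3, a4⟩ := hxfT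
              rw [hrT x.1 a1 hic.2.1] at a4
              refine ⟨hic, a1, a2, ?_, a4⟩
              rw [hj, ← huiMin]
              -- x ∈ S.cells with column j0 implies ui ≤ x.1 ; and x ≠ u
              have hxx : ((x.1, x.2) : Cell) = x := Prod.mk.eta
              have hge : ui ≤ x.1 := by
                by_contra hlt
                push_neg at hlt
                refine hua.2.2 x.1 hlt ?_
                rw [← hj] at *
                rw [hxx]
                exact hxS
              rcases eq_or_lt_of_le hge with he | hlt
              · exfalso
                refine hxu ?_
                rw [← hxx, ← he, hj]
              · exact hlt
            · exact (hfreecongr x hj).1 hxfT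
          exact hSU.2.2 x hxfS ((hfreeUT x).2 hxf) hxS

end MoveIcov
section Constructions

variable {n : ℕ}

theorem rowMax_mem' (T : FB n) {i : ℕ} (hn : 1 ≤ n) (h1 : 1 ≤ i) (hin : i ≤ n) :
    ((i, rMax T.cells n i) : Cell) ∈ T.cells := by
  rcases Nat.lt_or_ge i 2 with h | h
  · have : i = 1 := by omega
    subst this
    rw [rowMax1 T hn]
    exact T.root_mem
  · exact rowMax_mem T h hin

/-- The tableau obtained by adding a free cell. -/
def addFreeFB (S : FB n) {c : Cell} (hf : IsFree S c) : FB n where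
  cells := S.cells ∪ {c}
  isCell_of_mem := by
    rintro x (hx | hx)
    · exact S.isCell_of_mem _ hx
    · rw [Set.mem_singleton_iff] at hx
      rw [hx]
      exact hf.1
  root_mem := Or.inl S.root_mem
  border_mem := fun b hb => Or.inl (S.border_mem b hb)
  supported := by
    rintro x (hx | hx) hroot
    · rcases S.supported x hx hroot with ⟨j', h1, h2⟩ | ⟨i', h1, h2⟩
      · exact Or.inl ⟨j', h1, Or.inl h2⟩
      · exact Or.inr ⟨i', h1, Or.inl h2⟩
    · rw [Set.mem_singleton_iff] at hx
      subst hx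
      have h := (isFree_iff.1 hf)
      refine Or.inr ⟨cMin S.cells x.2, h.2.2.2.1, Or.inl ?_⟩
      exact colMin_mem S h.1.2.2.1 (by omega)

theorem addFreeFB_cells (S : FB n) {c : Cell} (hf : IsFree S c) :
    (addFreeFB S hf).cells = S.cells ∪ {c} := rfl

/-- The tableau obtained by deleting a left arrow (type II move). -/
def delFB (S : FB n) {i0 r f : ℕ} (hla : IsLeftArrow S ((i0, r) : Cell))
    (hmS : ((i0, f) : Cell) ∈ S.cells) (hfree : IsFree S ((i0, f) : Cell)) (hflt : f < r)
    (hgapS : ∀ j, f < j → j < r → ((i0, j) : Cell) ∉ S.cells) : FB n where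
  cells := S.cells \ {((i0, r) : Cell)}
  isCell_of_mem := fun x hx => S.isCell_of_mem _ hx.1
  root_mem := by
    refine ⟨S.root_mem, ?_⟩
    intro hcon
    rw [Set.mem_singleton_iff] at hcon
    have h1 : (1 : ℕ) = i0 := congrArg Prod.fst hcon
    have := (isLeftArrow_iff.1 hla).1
    simp only at this
    omega
  border_mem := by
    intro b hb
    refine ⟨S.border_mem b hb, ?_⟩
    intro hcon
    rw [Set.mem_singleton_iff] at hcon
    rw [hcon] at hb
    obtain ⟨hb1, hb2, hb3⟩ := hb
    simp only at hb1 hb2 hb3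
    have hic := S.isCell_of_mem _ hmS
    obtain ⟨e1, e2, e3, e4, e5⟩ := hic
    simp only at e1 e2 e3 e4 e5
    omega
  supported := by
    rintro x ⟨hx, hxl⟩ hroot
    rw [Set.mem_singleton_iff] at hxl
    have hrn : r ≤ n := (S.isCell_of_mem _ hla.1).2.2.2.1
    have hf1 : 1 ≤ f := (S.isCell_of_mem _ hmS).2.2.1
    rcases S.supported x hx hroot with ⟨j', h1, h2⟩ | ⟨i', h1, h2⟩
    · by_cases hyu : ((x.1, j') : Cell) = ((i0, r) : Cell)
      · -- the supporter was the deleted arrow itself, to the left of x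
        have e1 : x.1 = i0 := congrArg Prod.fst hyu
        have e2 : j' = r := congrArg Prod.snd hyu
        have hxr : x.2 < r := by omega
        have hxx : ((x.1, x.2) : Cell) = x := Prod.mk.eta
        rcases Nat.lt_trichotomy x.2 f with hc | hc | hc
        · refine Or.inl ⟨f, hc, ⟨?_, ?_⟩⟩
          · rw [e1]; exact hmS
          · rw [Set.mem_singleton_iff, e1]
            intro hcon
            have := congrArg Prod.snd hcon
            simp only at this
            omega
        · -- x = (i0, f) which is free : support from above
          have h3 := (isFree_iff.1 hfree).2.2.2.1
          simp only at h3
          refine Or.inr ⟨cMin S.cells f, ?_, ⟨?_, ?_⟩⟩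
          · omega
          · rw [hc]
            exact colMin_mem S hf1 (by omega)
          · rw [Set.mem_singleton_iff]
            intro hcon
            have := congrArg Prod.fst hcon
            simp only at this
            omega
        · exfalso
          refine hgapS x.2 hc hxr ?_
          rw [← e1, hxx]
          exact hx
      · exact Or.inl ⟨j', h1, h2, fun hcon => hyu (Set.mem_singleton_iff.1 hcon)⟩
    · by_cases hyu : ((i', x.2) : Cell) = ((i0, r) : Cell)
      · have e1 : i' = i0 := congrArg Prod.fst hyu
        have e2 : x.2 = r := congrArg Prod.snd hyu
        have hcm := cMin_lt_of_la hla
        simp only at hcm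
        refine Or.inr ⟨cMin S.cells r, by omega, ⟨?_, ?_⟩⟩
        · rw [e2]
          exact colMin_mem S (by omega) hrn
        · rw [Set.mem_singleton_iff]
          intro hcon
          have := congrArg Prod.fst hcon
          simp only at this
          omega
      · exact Or.inr ⟨i', h1, h2, fun hcon => hyu (Set.mem_singleton_iff.1 hcon)⟩

theorem delFB_cells (S : FB n) {i0 r f : ℕ} (hla : IsLeftArrow S ((i0, r) : Cell))
    (hmS : ((i0, f) : Cell) ∈ S.cells) (hfree : IsFree S ((i0, f) : Cell)) (hflt : f < r)
    (hgapS : ∀ j, f < j → j < r → ((i0, j) : Cell) ∉ S.cells) :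
    (delFB S hla hmS hfree hflt hgapS).cells = S.cells \ {((i0, r) : Cell)} := rfl

/-- The cell set for a type I move. -/
def muSet (S : FB n) (ui ci j0 : ℕ) : Set Cell :=
  if IsBorder n ((ui, j0) : Cell) then S.cells ∪ {((ci, j0) : Cell)}
  else (S.cells ∪ {((ci, j0) : Cell)}) \ {((ui, j0) : Cell)}

theorem mem_muSet {S : FB n} {ui ci j0 : ℕ} {x : Cell} :
    x ∈ muSet S ui ci j0 ↔ (x ∈ S.cells ∨ x = ((ci, j0) : Cell)) ∧
      (IsBorder n ((ui, j0) : Cell) ∨ x ≠ ((ui, j0) : Cell)) := by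
  unfold muSet
  by_cases hb : IsBorder n ((ui, j0) : Cell)
  · simp only [hb, if_true, Set.mem_union, Set.mem_singleton_iff]
    tauto
  · simp only [hb, if_false, Set.mem_diff, Set.mem_union, Set.mem_singleton_iff]
    tauto

/-- The tableau obtained by a type I move. -/
noncomputable def moveUpFB (S : FB n) (hn : 1 ≤ n) {ui ci j0 : ℕ}
    (hua : IsUpArrow S ((ui, j0) : Cell)) (hclt : ci < ui) (hci1 : 1 ≤ ci)
    (hccell : IsCell n ((ci, j0) : Cell)) (hrc : j0 < rMax S.cells n ci) : FB n where
  cells := muSet S ui ci j0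
  isCell_of_mem := by
    intro x hx
    rcases (mem_muSet.1 hx).1 with h | h
    · exact S.isCell_of_mem _ h
    · rw [h]; exact hccell
  root_mem := by
    rw [mem_muSet]
    refine ⟨Or.inl S.root_mem, Or.inr ?_⟩
    intro hcon
    have h1 : (1 : ℕ) = ui := congrArg Prod.fst hcon
    have h2 : n = j0 := congrArg Prod.snd hcon
    have := (isUpArrow_iff.1 hua).2.1
    simp only at this
    omega
  border_mem := by
    intro b hb
    rw [mem_muSet]
    refine ⟨Or.inl (S.border_mem b hb), ?_⟩
    by_cases hbu : b = ((ui, j0) : Cell)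
    · left; rw [← hbu]; exact hb
    · right; exact hbu
  supported := by
    intro x hx hroot
    have hj0n : j0 < n := (isUpArrow_iff.1 hua).2.1
    have hui2 : 2 ≤ ui := by omega
    have huin : ui ≤ n := (S.isCell_of_mem _ hua.1).2.1
    have hcin : ci ≤ n := by omega
    have hru : j0 < rMax S.cells n ui := lt_rMax_of_ua hua
    rcases (mem_muSet.1 hx).1 with hxS | hxc
    · rcases S.supported x hxS hroot with ⟨j', h1, h2⟩ | ⟨i', h1, h2⟩
      · by_cases hyu : ((x.1, j') : Cell) = ((ui, j0) : Cell)
        · have e1 : x.1 = ui := congrArg Prod.fst hyu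
          have e2 : j' = j0 := congrArg Prod.snd hyu
          refine Or.inl ⟨rMax S.cells n ui, by omega, ?_⟩
          rw [mem_muSet, e1]
          refine ⟨Or.inl (rowMax_mem S hui2 huin), Or.inr ?_⟩
          intro hcon
          have := congrArg Prod.snd hcon
          simp only at this
          omega
        · refine Or.inl ⟨j', h1, ?_⟩
          rw [mem_muSet]
          exact ⟨Or.inl h2, Or.inr hyu⟩
      · by_cases hyu : ((i', x.2) : Cell) = ((ui, j0) : Cell)
        · have e1 : i' = ui := congrArg Prod.fst hyu
          have e2 : x.2 = j0 := congrArg Prod.snd hyu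
          refine Or.inr ⟨ci, by omega, ?_⟩
          rw [mem_muSet, e2]
          refine ⟨Or.inr rfl, Or.inr ?_⟩
          intro hcon
          have := congrArg Prod.fst hcon
          simp only at this
          omega
        · refine Or.inr ⟨i', h1, ?_⟩
          rw [mem_muSet]
          exact ⟨Or.inl h2, Or.inr hyu⟩
    · -- x is the new cell (ci, j0)
      have e1 : x.1 = ci := congrArg Prod.fst hxc
      have e2 : x.2 = j0 := congrArg Prod.snd hxc
      refine Or.inl ⟨rMax S.cells n ci, by omega, ?_⟩
      rw [mem_muSet, e1]
      refine ⟨Or.inl (rowMax_mem' S hn hci1 hcin), Or.inr ?_⟩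
      intro hcon
      have := congrArg Prod.fst hcon
      simp only at this
      omega

theorem moveUpFB_cells (S : FB n) (hn : 1 ≤ n) {ui ci j0 : ℕ}
    (hua : IsUpArrow S ((ui, j0) : Cell)) (hclt : ci < ui) (hci1 : 1 ≤ ci)
    (hccell : IsCell n ((ci, j0) : Cell)) (hrc : j0 < rMax S.cells n ci) :
    (moveUpFB S hn hua hclt hci1 hccell hrc).cells = muSet S ui ci j0 := rfl

end Constructions
section CovMove

variable {n : ℕ}

theorem cov_move {S T : FB n} (hn : 1 ≤ n) (h : CovRel S T) :
    MoveI n S T ∨ MoveII n S T ∨ MoveIII n S T := by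
  obtain ⟨hlhd, hne, hmin⟩ := h
  obtain ⟨hcol, hrow, hfree⟩ := (lhd_iff hn).1 hlhd
  by_cases hI : ∃ j0, 1 ≤ j0 ∧ j0 < n ∧ cMin T.cells j0 < cMin S.cells j0
  · -- ═══ a column differs : type I move ═══
    left
    obtain ⟨j0, hj01, hj0n, hlt⟩ := hI
    have hua : IsUpArrow S ((cMin S.cells j0, j0) : Cell) := isUpArrow_iff.2 ⟨hj01, hj0n, rfl⟩
    set ui := cMin S.cells j0 with hui
    have hut1 : 1 ≤ cMin T.cells j0 :=
      (T.isCell_of_mem _ (colMin_mem T hj01 (by omega))).1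
    have hui2 : 2 ≤ ui := by omega
    have huin : ui ≤ n := (S.isCell_of_mem _ hua.1).2.1
    have hP1 : (1 : ℕ) < ui ∧ ¬ PointedLeft S ((1, j0) : Cell) := by
      refine ⟨by omega, ?_⟩
      rintro ⟨j', hj', hla⟩
      have e : (2 : ℕ) ≤ 1 := (isLeftArrow_iff.1 hla).1
      omega
    set ci := Nat.findGreatest (fun i => i < ui ∧ ¬ PointedLeft S ((i, j0) : Cell)) n with hci
    have hciP : ci < ui ∧ ¬ PointedLeft S ((ci, j0) : Cell) :=
      Nat.findGreatest_spec (P := fun i => i < ui ∧ ¬ PointedLeft S ((i, j0) : Cell))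
        (n := n) (m := 1) hn hP1
    have hci1 : 1 ≤ ci :=
      Nat.le_findGreatest (P := fun i => i < ui ∧ ¬ PointedLeft S ((i, j0) : Cell)) hn hP1
    have hbet : ∀ i', ci < i' → i' < ui → PointedLeft S ((i', j0) : Cell) := by
      intro i' hgt hltu
      by_contra hcon
      have : i' ≤ ci := Nat.le_findGreatest (by omega) ⟨hltu, hcon⟩
      omega
    have hccell : IsCell n ((ci, j0) : Cell) := by
      obtain ⟨e1, e2, e3, e4, e5⟩ := S.isCell_of_mem _ hua.1
      simp only at e1 e2 e3 e4 e5
      exact ⟨by omega, by omega, by omega, by omega, by simp only; omega⟩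
    have hcnotS : ((ci, j0) : Cell) ∉ S.cells := hua.2.2 ci hciP.1
    have hrc : j0 < rMax S.cells n ci := by
      rcases Nat.lt_or_ge ci 2 with h1 | h1
      · have : ci = 1 := by omega
        rw [this, rowMax1 S hn]
        exact hj0n
      · have hge : j0 ≤ rMax S.cells n ci := by
          by_contra hlt2
          push_neg at hlt2
          exact hciP.2 ⟨rMax S.cells n ci, hlt2, isLeftArrow_iff.2 ⟨h1, by omega, rfl⟩⟩
        rcases eq_or_lt_of_le hge with he | hlt2
        · exact absurd (he ▸ rowMax_mem S h1 (by omega)) hcnotS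
        · exact hlt2
    set U := moveUpFB S hn hua hciP.1 hci1 hccell hrc with hU
    have hmemU : ∀ x : Cell, x ∈ U.cells ↔ (x ∈ S.cells ∨ x = ((ci, j0) : Cell)) ∧
        (IsBorder n ((ui, j0) : Cell) ∨ x ≠ ((ui, j0) : Cell)) := fun x => mem_muSet
    have hMSU : MoveI n S U := by
      refine ⟨(ui, j0), (ci, j0), hua, rfl, hciP.1, hccell, hciP.2,
        fun i' a b => hbet i' a b, ?_⟩
      by_cases hb : IsBorder n ((ui, j0) : Cell)
      · right
        refine ⟨hb, ?_⟩
        show muSet S ui ci j0 = _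
        unfold muSet
        rw [if_pos hb]
      · left
        refine ⟨hb, ?_⟩
        show muSet S ui ci j0 = _
        unfold muSet
        rw [if_neg hb]
    have hLSU : Lhd S U := (moveI_cov hn hMSU).1
    -- arrows of U
    have hru : j0 < rMax S.cells n ui := lt_rMax_of_ua hua
    have hrU : ∀ i, 2 ≤ i → i ≤ n → rMax U.cells n i = rMax S.cells n i := by
      intro i h2 hin
      refine rMax_eq_of ?_ (Nat.findGreatest_le n) ?_
      · rw [hmemU]
        refine ⟨Or.inl (rowMax_mem S h2 hin), Or.inr ?_⟩
        intro hcon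
        have e1 : i = ui := congrArg Prod.fst hcon
        have e2 : rMax S.cells n i = j0 := congrArg Prod.snd hcon
        rw [e1] at e2
        omega
      · intro j hj
        rw [hmemU] at hj
        rcases hj.1 with hj1 | hj1
        · exact le_rMax hj1
        · have e1 : i = ci := congrArg Prod.fst hj1
          have e2 : j = j0 := congrArg Prod.snd hj1
          rw [e1, e2]
          omega
    have hcUj : ∀ j, 1 ≤ j → j ≤ n → j ≠ j0 → cMin U.cells j = cMin S.cells j := by
      intro j h1 hjn hnej
      refine cMin_eq_of ?_ ?_
      · rw [hmemU]
        refine ⟨Or.inl (colMin_mem S h1 hjn), Or.inr ?_⟩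
        intro hcon
        exact hnej (congrArg Prod.snd hcon)
      · intro i hi
        rw [hmemU] at hi
        rcases hi.1 with hi1 | hi1
        · exact cMin_le hi1
        · exact absurd (congrArg Prod.snd hi1) hnej
    have hcU0 : cMin U.cells j0 = ci := by
      refine cMin_eq_of ?_ ?_
      · rw [hmemU]
        refine ⟨Or.inr rfl, Or.inr ?_⟩
        intro hcon
        have := congrArg Prod.fst hcon
        simp only at this
        omega
      · intro i hi
        rw [hmemU] at hi
        rcases hi.1 with hi1 | hi1
        · have := cMin_le hi1
          omega
        · have := congrArg Prod.fst hi1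
          simp only at this
          omega
    -- the up arrow of T in column j0 is weakly above c
    have hkey : cMin T.cells j0 ≤ ci := by
      by_contra hgt
      push_neg at hgt
      have hut2 : 2 ≤ cMin T.cells j0 := by omega
      obtain ⟨j', hj', hla⟩ := hbet (cMin T.cells j0) hgt hlt
      have hj'max : j' = rMax S.cells n (cMin T.cells j0) := (isLeftArrow_iff.1 hla).2.2
      have hutT : ((cMin T.cells j0, j0) : Cell) ∈ T.cells := colMin_mem T hj01 (by omega)
      have h1 : j0 ≤ rMax T.cells n (cMin T.cells j0) := le_rMax hutT
      have h2 : rMax T.cells n (cMin T.cells j0) ≤ rMax S.cells n (cMin T.cells j0) :=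
        hrow _ hut2 (T.isCell_of_mem _ hutT).2.1
      simp only at hj' hj'max
      omega
    have hLUT : Lhd U T := by
      rw [lhd_iff hn]
      refine ⟨?_, ?_, ?_⟩
      · intro j a b
        by_cases hj : j = j0
        · subst hj
          rw [hcU0]
          exact hkey
        · rw [hcUj j a (by omega) hj]
          exact hcol j a b
      · intro i a b
        rw [hrU i a b]
        exact hrow i a b
      · intro x hxU hxT hxm
        rw [hmemU] at hxm
        rcases hxm.1 with hxS | hxc
        · by_cases hj : x.2 = j0
          · have hxge : ui ≤ x.1 := by
              have := cMin_le (show ((x.1, x.2) : Cell) ∈ S.cells by rw [Prod.mk.eta]; exact hxS)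
              rw [hj] at this
              omega
            rcases eq_or_lt_of_le hxge with he | hlt2
            · have hxu : x = ((ui, j0) : Cell) := by
                rw [Prod.ext_iff]
                exact ⟨he.symm, hj⟩
              rcases hxm.2 with hb | hnexu
              · rw [hxu]
                exact T.border_mem _ hb
              · exact absurd hxu hnexu
            · have hxfS : IsFree S x := by
                rw [isFree_iff] at hxU ⊢
                obtain ⟨hic, a1, a2, a3, a4⟩ := hxU
                exact ⟨hic, a1, a2, by rw [hj]; omega,
                  by rw [← hrU x.1 a1 hic.2.1]; exact a4⟩
              exact hfree x hxfS hxT hxS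
          · have hxfS : IsFree S x := by
              rw [isFree_iff] at hxU ⊢
              obtain ⟨hic, a1, a2, a3, a4⟩ := hxU
              exact ⟨hic, a1, a2, by rw [← hcUj x.2 hic.2.2.1 (by omega) hj]; exact a3,
                by rw [← hrU x.1 a1 hic.2.1]; exact a4⟩
            exact hfree x hxfS hxT hxS
        · exfalso
          rw [hxc, isFree_iff] at hxU
          obtain ⟨_, _, _, a3, _⟩ := hxU
          simp only at a3
          omega
    rcases hmin U hLSU hLUT with hUS | hUT
    · exfalso
      have hcmem : ((ci, j0) : Cell) ∈ U.cells := by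
        rw [hmemU]
        refine ⟨Or.inr rfl, Or.inr ?_⟩
        intro hcon
        have := congrArg Prod.fst hcon
        simp only at this
        omega
      rw [hUS] at hcmem
      exact hcnotS hcmem
    · exact hUT ▸ hMSU
  push_neg at hI
  have hceq : ∀ j, 1 ≤ j → j < n → cMin T.cells j = cMin S.cells j := by
    intro j a b
    have := hcol j a b
    have := hI j a b
    omega
  by_cases hII : ∃ i0, 2 ≤ i0 ∧ i0 ≤ n ∧ rMax T.cells n i0 < rMax S.cells n i0
  · -- ═══ a row differs : type II move ═══
    right; left
    obtain ⟨i0, hi02, hi0n, hrlt⟩ := hII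
    have hla : IsLeftArrow S ((i0, rMax S.cells n i0) : Cell) :=
      isLeftArrow_iff.2 ⟨hi02, hi0n, rfl⟩
    have hlaT : IsLeftArrow T ((i0, rMax T.cells n i0) : Cell) :=
      isLeftArrow_iff.2 ⟨hi02, hi0n, rfl⟩
    set r := rMax S.cells n i0 with hrdef
    set r' := rMax T.cells n i0 with hr'def
    have hrn : r ≤ n := (S.isCell_of_mem _ hla.1).2.2.2.1
    have hr'cell : IsCell n ((i0, r') : Cell) := T.isCell_of_mem _ (rowMax_mem T hi02 hi0n)
    have hr'1 : 1 ≤ r' := hr'cell.2.2.1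
    have hupT : cMin T.cells r' < i0 := by
      have := cMin_lt_of_la hlaT
      simpa using this
    have hfr' : IsFree S ((i0, r') : Cell) := by
      rw [isFree_iff]
      refine ⟨hr'cell, hi02, by omega, ?_, by simp only; omega⟩
      have := hceq r' hr'1 (by omega)
      simp only
      omega
    set f := Nat.findGreatest (fun j => j < r ∧ IsFree S ((i0, j) : Cell)) n with hfdef
    have hfP : f < r ∧ IsFree S ((i0, f) : Cell) :=
      Nat.findGreatest_spec (P := fun j => j < r ∧ IsFree S ((i0, j) : Cell))
        (n := n) (m := r') (by omega) ⟨hrlt, hfr'⟩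
    have hr'f : r' ≤ f :=
      Nat.le_findGreatest (P := fun j => j < r ∧ IsFree S ((i0, j) : Cell))
        (by omega) ⟨hrlt, hfr'⟩
    have hgapF : ∀ j, f < j → j < r → ¬ IsFree S ((i0, j) : Cell) := by
      intro j h1 h2 hcon
      have : j ≤ f :=
        Nat.le_findGreatest (P := fun j => j < r ∧ IsFree S ((i0, j) : Cell))
          (by omega) ⟨h2, hcon⟩
      omega
    have hf1 : 1 ≤ f := (isFree_iff.1 hfP.2).1.2.2.1
    -- the nearest free cell is a dot of S
    have hmS : ((i0, f) : Cell) ∈ S.cells := by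
      by_contra hnot
      set U' := addFreeFB S hfP.2 with hU'
      have hM3 : MoveIII n S U' := ⟨((i0, f) : Cell), hfP.2, hnot, rfl⟩
      have hLSU' : Lhd S U' := (moveIII_cov hn hM3).1
      have hrU' := insert_free_rMax hfP.2 (addFreeFB_cells S hfP.2)
      have hcU' := insert_free_cMin hfP.2 (addFreeFB_cells S hfP.2)
      have hfrU' : ∀ x : Cell, IsFree U' x ↔ IsFree S x := fun x =>
        isFree_congr (fun a b => hrU' x.1 a b) (fun a b => hcU' x.2 a (by omega))
      have hLU'T : Lhd U' T := by
        rw [lhd_iff hn]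
        refine ⟨fun j a b => by rw [hcU' j a (by omega)]; exact hcol j a b,
          fun i a b => by rw [hrU' i a b]; exact hrow i a b, ?_⟩
        intro x hxU hxT hxm
        rcases hxm with hxS | hxc
        · exact hfree x ((hfrU' x).1 hxU) hxT hxS
        · exfalso
          rw [Set.mem_singleton_iff] at hxc
          rw [hxc, isFree_iff] at hxT
          obtain ⟨_, _, _, _, a4⟩ := hxT
          simp only at a4
          omega
      rcases hmin U' hLSU' hLU'T with h1 | h1
      · have : ((i0, f) : Cell) ∈ U'.cells := Or.inr rfl
        rw [h1] at this
        exact hnot this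
      · have h2 : rMax U'.cells n i0 = rMax S.cells n i0 := hrU' i0 hi02 hi0n
        rw [h1] at h2
        omega
    have hgapS : ∀ j, f < j → j < r → ((i0, j) : Cell) ∉ S.cells := by
      intro j h1 h2 hmem
      rcases mem_cases hmem with hroot | hla2 | hua2 | hfree2
      · have : i0 = 1 := congrArg Prod.fst hroot
        omega
      · have := (isLeftArrow_iff.1 hla2).2.2
        simp only at this
        omega
      · have e1 : i0 = cMin S.cells j := (isUpArrow_iff.1 hua2).2.2
        have e2 : j < n := (isUpArrow_iff.1 hua2).2.1
        have e3 : cMin T.cells j = i0 := by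
          rw [hceq j (by omega) e2]
          omega
        have e4 : ((i0, j) : Cell) ∈ T.cells := by
          have := colMin_mem T (j := j) (by omega) (by omega)
          rw [e3] at this
          exact this
        have := le_rMax e4
        omega
      · exact hgapF j h1 h2 hfree2
    set U := delFB S hla hmS hfP.2 hfP.1 hgapS with hU
    have hUcells : U.cells = S.cells \ {((i0, r) : Cell)} := rfl
    have hM2 : MoveII n S U :=
      ⟨((i0, r) : Cell), ((i0, f) : Cell), hla, rfl, hfP.1, hfP.2, hmS,
        fun j' a b => hgapF j' a b, rfl⟩
    have hLSU : Lhd S U := (moveII_cov hn hM2).1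
    -- arrows of U
    have hrU0 : rMax U.cells n i0 = f := by
      refine rMax_eq_of ?_ (by omega) ?_
      · rw [hUcells]
        refine ⟨hmS, ?_⟩
        intro hcon
        rw [Set.mem_singleton_iff] at hcon
        have := congrArg Prod.snd hcon
        simp only at this
        omega
      · intro j hj
        rw [hUcells] at hj
        obtain ⟨hjS, hjne⟩ := hj
        rw [Set.mem_singleton_iff] at hjne
        have hle : j ≤ r := le_rMax hjS
        have hner : j ≠ r := by
          intro hcon
          exact hjne (by rw [hcon])
        by_contra hgt
        push_neg at hgt
        exact hgapS j hgt (by omega) hjS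
    have hrUi : ∀ i, 2 ≤ i → i ≤ n → i ≠ i0 → rMax U.cells n i = rMax S.cells n i := by
      intro i a b hne'
      refine rMax_eq_of ?_ (Nat.findGreatest_le n) ?_
      · rw [hUcells]
        refine ⟨rowMax_mem S a b, ?_⟩
        intro hcon
        rw [Set.mem_singleton_iff] at hcon
        exact hne' (congrArg Prod.fst hcon)
      · intro j hj
        rw [hUcells] at hj
        exact le_rMax hj.1
    have hcU : ∀ j, 1 ≤ j → j ≤ n → cMin U.cells j = cMin S.cells j := by
      intro j a b
      refine cMin_eq_of ?_ ?_
      · rw [hUcells]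
        refine ⟨colMin_mem S a b, ?_⟩
        intro hcon
        rw [Set.mem_singleton_iff] at hcon
        have e1 : cMin S.cells j = i0 := congrArg Prod.fst hcon
        have e2 : j = r := congrArg Prod.snd hcon
        have := cMin_lt_of_la hla
        simp only at this
        rw [e2] at e1
        omega
      · intro i hi
        rw [hUcells] at hi
        exact cMin_le hi.1
    have hLUT : Lhd U T := by
      rw [lhd_iff hn]
      refine ⟨?_, ?_, ?_⟩
      · intro j a b
        rw [hcU j a (by omega)]
        exact hcol j a b
      · intro i a b
        by_cases hi : i = i0
        · subst hi
          omega
        · rw [hrUi i a b hi]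
          exact hrow i a b
      · intro x hxU hxT hxm
        rw [hUcells] at hxm
        have hxS : x ∈ S.cells := hxm.1
        have hxfS : IsFree S x := by
          rw [isFree_iff] at hxU ⊢
          obtain ⟨hic, a1, a2, a3, a4⟩ := hxU
          rw [hcU x.2 hic.2.2.1 (by omega)] at a3
          refine ⟨hic, a1, a2, a3, ?_⟩
          by_cases hi : x.1 = i0
          · rw [hi] at a4 ⊢
            omega
          · rw [← hrUi x.1 a1 hic.2.1 hi]
            exact a4
        exact hfree x hxfS hxT hxS
    rcases hmin U hLSU hLUT with hUS | hUT
    · exfalso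
      have : ((i0, r) : Cell) ∈ U.cells := by
        rw [hUS]
        exact hla.1
      rw [hUcells] at this
      exact this.2 rfl
    · exact hUT ▸ hM2
  · -- ═══ all arrows agree : type III move ═══
    right; right
    push_neg at hII
    have hreq : ∀ i, 2 ≤ i → i ≤ n → rMax T.cells n i = rMax S.cells n i := by
      intro i a b
      have := hrow i a b
      have := hII i a b
      omega
    have hfreeEq : ∀ x : Cell, IsFree T x ↔ IsFree S x := fun x =>
      isFree_congr (fun a b => hreq x.1 a b) (fun a b => hceq x.2 a b)
    have hST : S.cells ⊆ T.cells :=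
      cells_subset_of (fun i a b => (hreq i a b).symm) (fun j a b => (hceq j a b).symm)
        (fun x hxf hxm => hfree x hxf ((hfreeEq x).2 hxf) hxm)
    have hDne : ∃ c : Cell, c ∈ T.cells ∧ c ∉ S.cells := by
      by_contra hcon
      push_neg at hcon
      exact hne (FB.ext' (Set.Subset.antisymm hST (fun x hx => hcon x hx)))
    obtain ⟨c, hcT, hcS⟩ := hDne
    have hfreeTmem : ∀ x : Cell, x ∈ T.cells → x ∉ S.cells → IsFree S x := by
      intro x hxT hxS
      rcases mem_cases hxT with hroot | hla2 | hua2 | hfree2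
      · exact absurd (hroot ▸ S.root_mem) hxS
      · exfalso
        obtain ⟨e1, e2, e3⟩ := isLeftArrow_iff.1 hla2
        refine hxS ?_
        have : x = ((x.1, rMax S.cells n x.1) : Cell) := by
          rw [← hreq x.1 e1 e2, ← e3, Prod.mk.eta]
        rw [this]
        exact rowMax_mem S e1 e2
      · exfalso
        obtain ⟨e1, e2, e3⟩ := isUpArrow_iff.1 hua2
        refine hxS ?_
        have : x = ((cMin S.cells x.2, x.2) : Cell) := by
          rw [← hceq x.2 e1 e2, ← e3, Prod.mk.eta]
        rw [this]
        exact colMin_mem S e1 (by omega)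
      · exact (hfreeEq x).1 hfree2
    have hcf : IsFree S c := hfreeTmem c hcT hcS
    refine ⟨c, hcf, hcS, ?_⟩
    apply Set.Subset.antisymm
    · intro x hxT
      by_cases hxS : x ∈ S.cells
      · exact Or.inl hxS
      by_cases hxc : x = c
      · exact Or.inr hxc
      exfalso
      set U := addFreeFB S hcf with hU
      have hM3 : MoveIII n S U := ⟨c, hcf, hcS, rfl⟩
      have hLSU : Lhd S U := (moveIII_cov hn hM3).1
      have hrU := insert_free_rMax hcf (addFreeFB_cells S hcf)
      have hcU := insert_free_cMin hcf (addFreeFB_cells S hcf)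
      have hfrU : ∀ y : Cell, IsFree U y ↔ IsFree S y := fun y =>
        isFree_congr (fun a b => hrU y.1 a b) (fun a b => hcU y.2 a (by omega))
      have hLUT : Lhd U T := by
        rw [lhd_iff hn]
        refine ⟨fun j a b => by rw [hcU j a (by omega)]; exact hcol j a b,
          fun i a b => by rw [hrU i a b]; exact hrow i a b, ?_⟩
        intro y hyU hyT hym
        rcases hym with hyS | hyc
        · exact hfree y ((hfrU y).1 hyU) hyT hyS
        · rw [Set.mem_singleton_iff] at hyc
          rw [hyc]
          exact hcT
      rcases hmin U hLSU hLUT with h1 | h1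
      · have : c ∈ U.cells := Or.inr rfl
        rw [h1] at this
        exact hcS this
      · have : x ∈ U.cells := by
          rw [h1]
          exact hxT
        rcases this with h2 | h2
        · exact hxS h2
        · rw [Set.mem_singleton_iff] at h2
          exact hxc h2
    · rintro x (hx | hx)
      · exact hST hx
      · rw [Set.mem_singleton_iff] at hx
        rw [hx]
        exact hcT

end CovMove

/-- `S ⊲ T` is a cover relation in `esTam n` if and only if `T` is
obtained from `S` by a move of type I, II or III. -/
theorem cover_iff_move (n : ℕ) (hn : 1 ≤ n) :
    ∀ S T : FB n, CovRel S T ↔ (MoveI n S T ∨ MoveII n S T ∨ MoveIII n S T) := by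
  intro S T
  constructor
  · exact cov_move hn
  · rintro (h | h | h)
    · exact moveI_cov hn h
    · exact moveII_cov hn h
    · exact moveIII_cov hn h

end EsTam
end

section
/- An fb-tableau of size n is uniquely determined by its changeable cells together with their types: if two fb-tableaux S and T of size n have the same set of changeable cells of type I, the same set of changeable cells of type II, and the same set of changeable cells of type III, then S = T. -/
/-!
Up-arrows outside row 1 are exactly the changeable cells of type I. A row-1 up-arrow `(1, j)` of
`S` missing from `T` is impossible: the border cell `(j + 1, j)` gives `T` an up-arrow lower in
column `j`, which is of type I for `T`, hence an up-arrow of `S` below `(1, j) ∈ S`.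

Once the up-arrows agree, so do the left-arrows. If row `i` has its left-arrow at `(i, a)` in `S`
and at `(i, b)` in `T` with `b < a`, then `(i, b)` is free in `S`, and every free cell of `S`
between them is a cell of `S` (a missing one would be of type III, hence free in `T`, hence to the
right of a left-arrow of `T` beyond `(i, b)`). So `(i, a)` is of type II for `S`, hence a
left-arrow of `T`: a contradiction.

Finally every cell other than the root and the arrows is free, and the free cells of `S` that
are not in `S` are those of type III, so the cells themselves agree.
-/

open scoped Classical

namespace EsTam

/-- `c` is a changeable cell of type I of `T`: an up-arrow of `T` such that some
cell strictly above it in its column is not pointed by a left-arrow of `T`. -/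
def ChangeableI (n : ℕ) (T : FB n) (c : Cell) : Prop :=
  IsUpArrow T c ∧
    ∃ c' : Cell, c'.2 = c.2 ∧ c'.1 < c.1 ∧ IsCell n c' ∧ ¬ PointedLeft T c'

/-- `c` is a changeable cell of type II of `T`: a left-arrow of `T` such that the
nearest free cell of `T` strictly to its right exists and belongs to `T`. -/
def ChangeableII (n : ℕ) (T : FB n) (c : Cell) : Prop :=
  IsLeftArrow T c ∧
    ∃ m : Cell, m.1 = c.1 ∧ m.2 < c.2 ∧ IsFree T m ∧ m ∈ T.cells ∧
      ∀ j', m.2 < j' → j' < c.2 → ¬ IsFree T (c.1, j')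

/-- `c` is a changeable cell of type III of `T`: a free cell of `T` that does not
belong to `T`. -/
def ChangeableIII (n : ℕ) (T : FB n) (c : Cell) : Prop :=
  IsFree T c ∧ c ∉ T.cells


variable {n : ℕ}

lemma FB.ext {S T : FB n} (h : S.cells = T.cells) : S = T := by
  cases S
  cases T
  congr

section Arrows

variable {T : FB n}

lemma not_isLeftArrow_row_one (T : FB n) (j : ℕ) : ¬ IsLeftArrow T (1, j) := by
  rintro ⟨hmem, hne, hleft⟩
  rcases (T.isCell_of_mem _ hmem).2.2.2.1.lt_or_eq with h | rfl
  · exact hleft n h T.root_mem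
  · exact hne rfl

lemma IsLeftArrow.two_le_fst {c : Cell} (h : IsLeftArrow T c) : 2 ≤ c.1 := by
  obtain ⟨i, j⟩ := c
  have := (T.isCell_of_mem _ h.1).1
  rcases (show i = 1 ∨ 2 ≤ i by omega) with rfl | hi
  · exact absurd h (not_isLeftArrow_row_one T j)
  · exact hi

lemma IsLeftArrow.not_isUpArrow {c : Cell} (h : IsLeftArrow T c) : ¬ IsUpArrow T c := by
  rintro ⟨-, -, habove⟩
  rcases T.supported c h.1 h.2.1 with ⟨j', hj', hmem⟩ | ⟨i', hi', hmem⟩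
  · exact h.2.2 j' hj' hmem
  · exact habove i' hi' hmem

lemma exists_isUpArrow_le (T : FB n) {i j : ℕ} (h : ((i, j) : Cell) ∈ T.cells) (hj : j < n) :
    ∃ i₀ ≤ i, IsUpArrow T (i₀, j) := by
  have hex : ∃ k, ((k, j) : Cell) ∈ T.cells := ⟨i, h⟩
  refine ⟨Nat.find hex, Nat.find_min' hex h, Nat.find_spec hex, fun hr => ?_,
    fun k hk => Nat.find_min hex hk⟩
  simp only [root, Prod.ext_iff] at hr
  omega

lemma exists_isLeftArrow_ge (T : FB n) {i j : ℕ} (h : ((i, j) : Cell) ∈ T.cells)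
    (hi : 2 ≤ i) : ∃ j₁ ≥ j, IsLeftArrow T (i, j₁) := by
  have hjn : j ≤ n := (T.isCell_of_mem _ h).2.2.2.1
  set P : ℕ → Prop := fun k => ((i, k) : Cell) ∈ T.cells
  refine ⟨Nat.findGreatest P n, Nat.le_findGreatest hjn h,
    Nat.findGreatest_spec (P := P) hjn h, fun hr => ?_, fun j' hj' hmem => ?_⟩
  · simp only [root, Prod.ext_iff] at hr
    omega
  · exact Nat.findGreatest_is_greatest hj' (T.isCell_of_mem _ hmem).2.2.2.1 hmem

lemma exists_isLeftArrow (T : FB n) {i : ℕ} (hi : 2 ≤ i) (hin : i ≤ n) :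
    ∃ j, IsLeftArrow T (i, j) :=
  let ⟨j, _, hj⟩ := exists_isLeftArrow_ge T (T.border_mem (i, i - 1) ⟨hi, hin, rfl⟩) hi
  ⟨j, hj⟩

lemma isFree_of_mem {c : Cell} (hc : c ∈ T.cells) (hr : c ≠ root n)
    (hu : ¬ IsUpArrow T c) (hl : ¬ IsLeftArrow T c) : IsFree T c := by
  obtain ⟨i, j⟩ := c
  obtain ⟨i', hi', habove⟩ : ∃ i' < i, ((i', j) : Cell) ∈ T.cells := by
    by_contra! h
    exact hu ⟨hc, hr, h⟩
  obtain ⟨j', hj', hleft⟩ : ∃ j' > j, ((i, j') : Cell) ∈ T.cells := by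
    by_contra! h
    exact hl ⟨hc, hr, h⟩
  have hi : 2 ≤ i := by have := (T.isCell_of_mem _ habove).1; omega
  have hj : j < n := by have := (T.isCell_of_mem _ hleft).2.2.2.1; omega
  obtain ⟨i₀, hi₀, hup⟩ := exists_isUpArrow_le T habove hj
  obtain ⟨j₁, hj₁, hla⟩ := exists_isLeftArrow_ge T hleft hi
  exact ⟨T.isCell_of_mem _ hc, ⟨i₀, by omega, hup⟩, ⟨j₁, by omega, hla⟩⟩

lemma isFree_congr_s8 {S : FB n} (hU : ∀ c, IsUpArrow S c ↔ IsUpArrow T c)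
    (hL : ∀ c, IsLeftArrow S c ↔ IsLeftArrow T c) (c : Cell) : IsFree S c ↔ IsFree T c := by
  simp only [IsFree, hU, hL]

end Arrows

section Changeable

variable {T : FB n}

lemma changeableI_of_isUpArrow {c : Cell} (h : IsUpArrow T c) (hc : 2 ≤ c.1) :
    ChangeableI n T c := by
  have hcell := T.isCell_of_mem _ h.1
  refine ⟨h, (1, c.2), rfl, by omega,
    ⟨le_rfl, hcell.1.trans hcell.2.1, hcell.2.2.1, hcell.2.2.2.1, Or.inl one_le_two⟩, ?_⟩
  rintro ⟨j', -, hl⟩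
  exact not_isLeftArrow_row_one T j' hl

lemma changeableII_of_isFree_of_forall_mem {i a b : ℕ} (ha : IsLeftArrow T (i, a))
    (hba : b < a) (hb : IsFree T (i, b))
    (hmem : ∀ j ≥ b, j < a → IsFree T (i, j) → ((i, j) : Cell) ∈ T.cells) :
    ChangeableII n T (i, a) := by
  set m := Nat.findGreatest (fun j => IsFree T (i, j)) (a - 1)
  have hbm : b ≤ m := Nat.le_findGreatest (by omega) hb
  have hma : m < a := (Nat.findGreatest_le (a - 1)).trans_lt (by omega)
  have hm : IsFree T (i, m) :=
    Nat.findGreatest_spec (P := fun j => IsFree T (i, j)) (by omega : b ≤ a - 1) hb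
  exact ⟨ha, (i, m), rfl, hma, hm, hmem m hbm hma hm,
    fun j' hmj hja => Nat.findGreatest_is_greatest hmj (by omega)⟩

end Changeable

section SameChangeables

variable {S T : FB n}

lemma isUpArrow_of_changeableI_iff (hI : ∀ c, ChangeableI n S c ↔ ChangeableI n T c)
    {c : Cell} (h : IsUpArrow S c) : IsUpArrow T c := by
  obtain ⟨i, j⟩ := c
  have hcell := S.isCell_of_mem _ h.1
  rcases (show i = 1 ∨ 2 ≤ i by have := hcell.1; omega) with rfl | hi
  · have hj : j < n := hcell.2.2.2.1.lt_of_ne fun hj => h.2.1 (hj ▸ rfl)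
    have := hcell.2.2.1
    have hmem : ((1, j) : Cell) ∈ T.cells := by
      by_contra hnot
      obtain ⟨i₀, -, hup⟩ :=
        exists_isUpArrow_le T (T.border_mem (j + 1, j) ⟨by omega, hj, rfl⟩) hj
      have hi₀ : 2 ≤ i₀ := by
        have := (T.isCell_of_mem _ hup.1).1
        rcases (show i₀ = 1 ∨ 2 ≤ i₀ by omega) with rfl | hi₀
        · exact absurd hup.1 hnot
        · exact hi₀
      exact ((hI _).mpr (changeableI_of_isUpArrow hup hi₀)).1.2.2 1 (by omega) h.1
    exact ⟨hmem, h.2.1, fun i' hi' hm => absurd (T.isCell_of_mem _ hm).1 (by omega)⟩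
  · exact ((hI _).mp (changeableI_of_isUpArrow h hi)).1

lemma isUpArrow_iff_of_changeableI_iff (hI : ∀ c, ChangeableI n S c ↔ ChangeableI n T c)
    (c : Cell) : IsUpArrow S c ↔ IsUpArrow T c :=
  ⟨isUpArrow_of_changeableI_iff hI, isUpArrow_of_changeableI_iff fun c => (hI c).symm⟩

lemma le_of_isLeftArrow_of_isLeftArrow
    (hII : ∀ c, ChangeableII n S c ↔ ChangeableII n T c)
    (hIII : ∀ c, ChangeableIII n S c ↔ ChangeableIII n T c)
    (hU : ∀ c, IsUpArrow S c ↔ IsUpArrow T c)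
    {i a b : ℕ} (hSa : IsLeftArrow S (i, a)) (hTb : IsLeftArrow T (i, b)) : a ≤ b := by
  by_contra! hba
  obtain ⟨i', hi', habove⟩ : ∃ i' < i, ((i', b) : Cell) ∈ T.cells := by
    by_contra! h
    exact hTb.not_isUpArrow ⟨hTb.1, hTb.2.1, h⟩
  obtain ⟨i₀, hi₀, hup⟩ :=
    exists_isUpArrow_le T habove (hba.trans_le (S.isCell_of_mem _ hSa.1).2.2.2.1)
  have hfree : IsFree S (i, b) :=
    ⟨T.isCell_of_mem _ hTb.1, ⟨i₀, by omega, (hU _).mpr hup⟩, ⟨a, hba, hSa⟩⟩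
  have hmem : ∀ j ≥ b, j < a → IsFree S (i, j) → ((i, j) : Cell) ∈ S.cells := by
    intro j hbj _ hj
    by_contra hnot
    obtain ⟨⟨-, -, j', hj', hla⟩, -⟩ := (hIII _).mp ⟨hj, hnot⟩
    exact hTb.2.2 j' (by omega) hla.1
  have hTa := (hII _).mp (changeableII_of_isFree_of_forall_mem hSa hba hfree hmem)
  exact hTb.2.2 a hba hTa.1.1

lemma isLeftArrow_iff_of_changeable_iff
    (hII : ∀ c, ChangeableII n S c ↔ ChangeableII n T c)
    (hIII : ∀ c, ChangeableIII n S c ↔ ChangeableIII n T c)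
    (hU : ∀ c, IsUpArrow S c ↔ IsUpArrow T c) (c : Cell) :
    IsLeftArrow S c ↔ IsLeftArrow T c := by
  have hcol {a b : ℕ} (hSa : IsLeftArrow S (c.1, a)) (hTb : IsLeftArrow T (c.1, b)) : a = b :=
    le_antisymm (le_of_isLeftArrow_of_isLeftArrow hII hIII hU hSa hTb)
      (le_of_isLeftArrow_of_isLeftArrow (fun c => (hII c).symm) (fun c => (hIII c).symm)
        (fun c => (hU c).symm) hTb hSa)
  constructor
  · intro hS
    obtain ⟨b, hT⟩ := exists_isLeftArrow T hS.two_le_fst (S.isCell_of_mem _ hS.1).2.1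
    rwa [← hcol hS hT] at hT
  · intro hT
    obtain ⟨a, hS⟩ := exists_isLeftArrow S hT.two_le_fst (T.isCell_of_mem _ hT.1).2.1
    rwa [hcol hS hT] at hS

lemma cells_subset_of_changeableIII_iff
    (hIII : ∀ c, ChangeableIII n S c ↔ ChangeableIII n T c)
    (hU : ∀ c, IsUpArrow S c ↔ IsUpArrow T c)
    (hL : ∀ c, IsLeftArrow S c ↔ IsLeftArrow T c) : S.cells ⊆ T.cells := by
  intro c hc
  by_cases hr : c = root n
  · exact hr ▸ T.root_mem
  by_cases hu : IsUpArrow S c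
  · exact ((hU c).mp hu).1
  by_cases hl : IsLeftArrow S c
  · exact ((hL c).mp hl).1
  by_contra hnot
  have hfree := (isFree_congr_s8 hU hL c).mp (isFree_of_mem hc hr hu hl)
  exact ((hIII c).mpr ⟨hfree, hnot⟩).2 hc

end SameChangeables

theorem determined_by_changeables_general (n : ℕ) :
    ∀ S T : FB n,
      (∀ c : Cell, ChangeableI n S c ↔ ChangeableI n T c) →
      (∀ c : Cell, ChangeableII n S c ↔ ChangeableII n T c) →
      (∀ c : Cell, ChangeableIII n S c ↔ ChangeableIII n T c) →
      S = T := by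
  intro S T hI hII hIII
  have hU := isUpArrow_iff_of_changeableI_iff hI
  have hL := isLeftArrow_iff_of_changeable_iff hII hIII hU
  exact FB.ext <| (cells_subset_of_changeableIII_iff hIII hU hL).antisymm
    (cells_subset_of_changeableIII_iff (fun c => (hIII c).symm) (fun c => (hU c).symm)
      (fun c => (hL c).symm))

/-- an fb-tableau is uniquely determined by its changeable cells
together with their types. -/
theorem determined_by_changeables (n : ℕ) (hn : 1 ≤ n) :
    ∀ S T : FB n,
      (∀ c : Cell, ChangeableI n S c ↔ ChangeableI n T c) →
      (∀ c : Cell, ChangeableII n S c ↔ ChangeableII n T c) →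
      (∀ c : Cell, ChangeableIII n S c ↔ ChangeableIII n T c) →
      S = T :=
  determined_by_changeables_general n

end EsTam
end
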